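/- arXiv:2004.14997 — 19 statements merged into one kernel-verified Lean document; each statement's English description precedes it below -/
import Mathlib

section
/- Let Φ = ({E_i}_{i=0}^d; {E*_i}_{i=0}^d) be an idempotent system on V, and for 0 ≤ i ≤ d set m_i = tr(E*_0 E_i). Then m_i ≠ 0 for 0 ≤ i ≤ d, and ∑_{i=0}^d m_i = 1. -/
open Module LinearMap

/-- Trace of a rank-one idempotent is 1. -/
lemma trace_idem_rank_one {F V : Type*} [Field F] [AddCommGroup V] [Module F V]
    [FiniteDimensional F V] (e : Module.End F V) (he : e * e = e)
    (hrk : Module.finrank F (LinearMap.range e) = 1) :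
    LinearMap.trace F V e = 1 := by
  have hproj : LinearMap.IsProj (LinearMap.range e) e := by
    constructor
    · intro x; exact ⟨x, rfl⟩
    · rintro x ⟨y, rfl⟩
      have := congrArg (fun f : Module.End F V => f y) he
      simpa [Module.End.mul_apply] using this
  rw [hproj.trace, hrk]
  norm_num

/-- For a rank-one idempotent `e` and any `X`, `e * X * e = trace (e * X) • e`. -/
lemma idem_sandwich {F V : Type*} [Field F] [AddCommGroup V] [Module F V]
    [FiniteDimensional F V] (e X : Module.End F V) (he : e * e = e)
    (hrk : Module.finrank F (LinearMap.range e) = 1) :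
    e * X * e = (LinearMap.trace F V (e * X)) • e := by
  obtain ⟨v, hv0, hv⟩ := finrank_eq_one_iff'.mp hrk
  -- v : range e, nonzero, spans
  have hev : e (v : V) = (v : V) := by
    obtain ⟨y, hy⟩ := v.2
    have := congrArg (fun f : Module.End F V => f y) he
    simp only [Module.End.mul_apply] at this
    rw [← hy]; exact this
  obtain ⟨c, hc⟩ := hv ⟨e (X (v : V)), ⟨X (v : V), rfl⟩⟩
  have hc' : e (X (v : V)) = c • (v : V) := by
    have := congrArg (Subtype.val) hc
    simpa using this.symm
  have key : e * X * e = c • e := by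
    ext w
    obtain ⟨t, ht⟩ := hv ⟨e w, ⟨w, rfl⟩⟩
    have ht' : e w = t • (v : V) := by
      have := congrArg (Subtype.val) ht
      simpa using this.symm
    simp only [Module.End.mul_apply, LinearMap.smul_apply]
    rw [ht', map_smul, map_smul, hc', smul_smul, smul_smul, mul_comm]
  have htr : LinearMap.trace F V (e * X) = c := by
    have h1 : LinearMap.trace F V (e * X * e) = LinearMap.trace F V (e * X) := by
      rw [LinearMap.trace_mul_comm, ← mul_assoc, he]
    rw [← h1, key, map_smul, trace_idem_rank_one e he hrk, smul_eq_mul, mul_one]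
  rw [htr, key]

theorem stmt_0 (d : ℕ) (F V : Type*) [Field F] [AddCommGroup V] [Module F V]
    [FiniteDimensional F V] (hdim : Module.finrank F V = d + 1)
    (E Es : Fin (d + 1) → Module.End F V)
    (hE : ∀ i j, E i * E j = if i = j then E i else 0)
    (hErk : ∀ i, Module.finrank F (LinearMap.range (E i)) = 1)
    (hEs : ∀ i j, Es i * Es j = if i = j then Es i else 0)
    (hEsrk : ∀ i, Module.finrank F (LinearMap.range (Es i)) = 1)
    (hnz : ∀ i, E 0 * Es i * E 0 ≠ 0)
    (hnzs : ∀ i, Es 0 * E i * Es 0 ≠ 0)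
    (m : Fin (d + 1) → F)
    (hm : ∀ i, m i = LinearMap.trace F V (Es 0 * E i)) :
    (∀ i, m i ≠ 0) ∧ ∑ i, m i = 1 := by
  have hEs00 : Es 0 * Es 0 = Es 0 := by simpa using hEs 0 0
  -- First part: m i ≠ 0
  have part1 : ∀ i, m i ≠ 0 := by
    intro i hmi
    apply hnzs i
    have := idem_sandwich (Es 0) (E i) hEs00 (hEsrk 0)
    rw [this, ← hm i, hmi, zero_smul]
  refine ⟨part1, ?_⟩
  -- Choose spanning vectors of the ranges of the E i
  have hchoose : ∀ i : Fin (d + 1), ∃ u : V, u ≠ 0 ∧ E i u = u ∧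
      ∀ j, j ≠ i → E j u = 0 := by
    intro i
    obtain ⟨v, hv0, _⟩ := finrank_eq_one_iff'.mp (hErk i)
    obtain ⟨y, hy⟩ := v.2
    refine ⟨(v : V), fun h => hv0 (Subtype.ext h), ?_, ?_⟩
    · have := congrArg (fun f : Module.End F V => f y) (by simpa using hE i i)
      simp only [Module.End.mul_apply] at this
      rw [← hy]; exact this
    · intro j hj
      have := congrArg (fun f : Module.End F V => f y) (hE j i)
      simp only [Module.End.mul_apply, if_neg hj] at this
      rw [← hy]; simpa using this
  choose u hu0 huE huE0 using hchoose
  -- u is linearly independent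
  have hli : LinearIndependent F u := by
    rw [Fintype.linearIndependent_iff]
    intro g hg j
    have := congrArg (E j) hg
    rw [map_sum, map_zero] at this
    have h2 : ∀ i ∈ Finset.univ, i ≠ j → E j (g i • u i) = 0 := by
      intro i _ hij
      rw [map_smul, huE0 i j (Ne.symm hij), smul_zero]
    rw [Finset.sum_eq_single j (fun i _ h => h2 i (Finset.mem_univ i) h)
      (fun h => absurd (Finset.mem_univ j) h)] at this
    rw [map_smul, huE j] at this
    exact (smul_eq_zero.mp this).resolve_right (hu0 j)
  -- u spans
  have hspan : Submodule.span F (Set.range u) = ⊤ := by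
    apply hli.span_eq_top_of_card_eq_finrank
    simp [hdim]
  -- Σ E i = 1
  have hsum1 : ∑ i, E i = 1 := by
    ext w
    have hw : w ∈ Submodule.span F (Set.range u) := hspan ▸ Submodule.mem_top
    simp only [Module.End.one_apply]
    induction hw using Submodule.span_induction with
    | mem x hx =>
      obtain ⟨i, rfl⟩ := hx
      rw [LinearMap.sum_apply]
      rw [Finset.sum_eq_single i (fun j _ h => huE0 i j h)
        (fun h => absurd (Finset.mem_univ i) h)]
      exact huE i
    | zero => simp
    | add x y _ _ hx hy => rw [map_add, hx, hy]
    | smul c x _ hx => rw [map_smul, hx]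
  -- Conclude
  have : ∑ i, m i = LinearMap.trace F V (Es 0) := by
    calc ∑ i, m i = ∑ i, LinearMap.trace F V (Es 0 * E i) := by
          simp_rw [hm]
      _ = LinearMap.trace F V (∑ i, Es 0 * E i) := by rw [map_sum]
      _ = LinearMap.trace F V (Es 0 * ∑ i, E i) := by rw [Finset.mul_sum]
      _ = LinearMap.trace F V (Es 0) := by rw [hsum1, mul_one]
  rw [this, trace_idem_rank_one (Es 0) hEs00 (hEsrk 0)]
end

section
/- Let Φ = ({E_i}_{i=0}^d; {E*_i}_{i=0}^d) be an idempotent system on V. Then tr(E_0 E*_0) ≠ 0, and with ν = tr(E_0 E*_0)^{-1} one has ν E_0 E*_0 E_0 = E_0 and ν E*_0 E_0 E*_0 = E*_0. -/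
lemma rank_one_idem_sandwich {F V : Type*} [Field F] [AddCommGroup V] [Module F V]
    [FiniteDimensional F V] (E X : Module.End F V) (hE : E * E = E)
    (hrk : Module.finrank F (LinearMap.range E) = 1) :
    E * X * E = (LinearMap.trace F V (E * X)) • E := by
  obtain ⟨v, hv0, hv⟩ := finrank_eq_one_iff'.mp hrk
  have hEfix : ∀ x ∈ LinearMap.range E, E x = x := by
    rintro x ⟨u, rfl⟩
    have := LinearMap.congr_fun hE u
    simpa [Module.End.mul_apply] using this
  have hc : ∀ w : V, ∃ c : F, E w = c • (v : V) := by
    intro w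
    obtain ⟨c, hcc⟩ := hv ⟨E w, ⟨w, rfl⟩⟩
    exact ⟨c, by simpa using (congrArg Subtype.val hcc).symm⟩
  obtain ⟨c, hcv⟩ := hc (X (v : V))
  have hvE : E (v : V) = (v : V) := hEfix _ v.2
  have heq : E * X * E = c • E := by
    ext w
    obtain ⟨cw, hcw⟩ := hc w
    simp only [Module.End.mul_apply, LinearMap.smul_apply, hcw, map_smul, hcv]
    rw [smul_comm]
  have hproj : LinearMap.IsProj (LinearMap.range E) E := ⟨fun x => ⟨x, rfl⟩, hEfix⟩
  have htrE : LinearMap.trace F V E = 1 := by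
    rw [hproj.trace, hrk, Nat.cast_one]
  have htr : LinearMap.trace F V (E * X) = c := by
    have h3 : LinearMap.trace F V (E * X * E) = LinearMap.trace F V (E * X) := by
      rw [LinearMap.trace_mul_comm, ← mul_assoc, hE]
    rw [← h3, heq, map_smul, htrE, smul_eq_mul, mul_one]
  rw [htr, heq]

theorem stmt_1 (d : ℕ) (F V : Type*) [Field F] [AddCommGroup V] [Module F V]
    [FiniteDimensional F V] (hdim : Module.finrank F V = d + 1)
    (E Es : Fin (d + 1) → Module.End F V)
    (hE : ∀ i j, E i * E j = if i = j then E i else 0)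
    (hErk : ∀ i, Module.finrank F (LinearMap.range (E i)) = 1)
    (hEs : ∀ i j, Es i * Es j = if i = j then Es i else 0)
    (hEsrk : ∀ i, Module.finrank F (LinearMap.range (Es i)) = 1)
    (hnz : ∀ i, E 0 * Es i * E 0 ≠ 0)
    (hnzs : ∀ i, Es 0 * E i * Es 0 ≠ 0) :
    LinearMap.trace F V (E 0 * Es 0) ≠ 0 ∧
      (LinearMap.trace F V (E 0 * Es 0))⁻¹ • (E 0 * Es 0 * E 0) = E 0 ∧
      (LinearMap.trace F V (E 0 * Es 0))⁻¹ • (Es 0 * E 0 * Es 0) = Es 0 := by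
  have h1 := rank_one_idem_sandwich (E 0) (Es 0) (by simpa using hE 0 0) (hErk 0)
  have h2 := rank_one_idem_sandwich (Es 0) (E 0) (by simpa using hEs 0 0) (hEsrk 0)
  have htr : LinearMap.trace F V (E 0 * Es 0) ≠ 0 := by
    intro h
    exact hnz 0 (by rw [h1, h, zero_smul])
  refine ⟨htr, ?_, ?_⟩
  · rw [h1, smul_smul, inv_mul_cancel₀ htr, one_smul]
  · rw [h2, LinearMap.trace_mul_comm F (Es 0) (E 0), smul_smul, inv_mul_cancel₀ htr, one_smul]
end

section
/- Let Φ = ({E_i}_{i=0}^d; {E*_i}_{i=0}^d) be an idempotent system on V. Then the (d+1)^2 elements {E_i E*_0 E_j | 0 ≤ i,j ≤ d} form a basis of the F-vector space End(V), and likewise the elements {E*_i E_0 E*_j | 0 ≤ i,j ≤ d} form a basis of End(V). -/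
open Module

/-- If `P` is a rank-one idempotent, every "corner" element `P * X * P` is a scalar
multiple of `P`. -/
lemma corner_scalar {F V : Type*} [Field F] [AddCommGroup V] [Module F V]
    (P : Module.End F V) (hP : P * P = P)
    (hrk : Module.finrank F (LinearMap.range P) = 1) (X : Module.End F V) :
    ∃ c : F, P * X * P = c • P := by
  obtain ⟨v, hv0, hvspan⟩ := (finrank_eq_one_iff' (K := F) (V := LinearMap.range P)).mp hrk
  -- `v` is a nonzero element of the range of `P`, and `P` fixes it.
  obtain ⟨u, hu⟩ := v.2
  have hPv : P v.1 = v.1 := by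
    rw [← hu, ← Module.End.mul_apply, hP]
  -- `P X P v = c • v` for some `c`.
  obtain ⟨c, hc⟩ := hvspan ⟨P (X v.1), X v.1, rfl⟩
  refine ⟨c, ?_⟩
  ext x
  -- `P x` is a multiple of `v`
  obtain ⟨g, hg⟩ := hvspan ⟨P x, x, rfl⟩
  have hgx : g • v.1 = P x := congrArg Subtype.val hg
  have hcx : c • v.1 = P (X v.1) := congrArg Subtype.val hc
  have : (P * X * P) x = P (X (P x)) := rfl
  rw [LinearMap.smul_apply, this, ← hgx]
  simp only [map_smul]
  rw [← hcx]
  exact smul_comm g c _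

/-- Main abstract lemma: given a system of orthogonal idempotents `A i` and a rank-one
idempotent `B` such that `B * A i * B ≠ 0` for all `i`, the family `A i * B * A j` is
linearly independent. -/
lemma key_li {F V : Type*} [Field F] [AddCommGroup V] [Module F V] {n : ℕ}
    (A : Fin n → Module.End F V)
    (hA : ∀ i j, A i * A j = if i = j then A i else 0)
    (B : Module.End F V) (hB : B * B = B)
    (hrk : Module.finrank F (LinearMap.range B) = 1)
    (hnz : ∀ i, B * A i * B ≠ 0) :
    LinearIndependent F (fun ij : Fin n × Fin n => A ij.1 * B * A ij.2) := by
  have hB0 : B ≠ 0 := by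
    intro h
    rw [h, LinearMap.range_zero, finrank_bot] at hrk
    exact zero_ne_one hrk
  -- scalars α i with B * A i * B = α i • B, α i ≠ 0
  have halpha : ∀ i, ∃ c : F, c ≠ 0 ∧ B * A i * B = c • B := by
    intro i
    obtain ⟨c, hc⟩ := corner_scalar B hB hrk (A i)
    refine ⟨c, ?_, hc⟩
    intro h0
    apply hnz i
    rw [hc, h0, zero_smul]
  -- each A k * B * A l is nonzero
  have hABA : ∀ k l, A k * B * A l ≠ 0 := by
    intro k l h
    obtain ⟨ck, hck, hk⟩ := halpha k
    obtain ⟨cl, hcl, hl⟩ := halpha l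
    have key : B * (A k * B * A l) * B = (ck * cl) • B := by
      have e1 : B * (A k * B * A l) * B = (B * A k * B) * (A l * B) := by
        noncomm_ring
      rw [e1, hk, smul_mul_assoc, ← mul_assoc, hl, smul_smul]
    rw [h, mul_zero, zero_mul] at key
    exact hB0 (by
      have := key.symm
      rwa [smul_eq_zero_iff_right (mul_ne_zero hck hcl)] at this)
  rw [Fintype.linearIndependent_iff]
  intro g hg ij
  obtain ⟨k, l⟩ := ij
  have hmul : A k * (∑ p : Fin n × Fin n, g p • (A p.1 * B * A p.2)) * A l
      = g (k, l) • (A k * B * A l) := by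
    rw [Finset.mul_sum, Finset.sum_mul]
    rw [Finset.sum_eq_single (k, l)]
    · rw [mul_smul_comm, smul_mul_assoc]
      congr 1
      have : A k * (A k * B * A l) * A l = (A k * A k) * B * (A l * A l) := by
        noncomm_ring
      rw [this, hA k k, hA l l]
      simp
    · intro p _ hp
      rw [mul_smul_comm, smul_mul_assoc]
      have : A k * (A p.1 * B * A p.2) * A l = (A k * A p.1) * B * (A p.2 * A l) := by
        noncomm_ring
      rw [this, hA k p.1, hA p.2 l]
      rcases eq_or_ne k p.1 with h1 | h1
      · have h2 : p.2 ≠ l := by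
          intro h2
          exact hp (by rw [Prod.ext_iff]; exact ⟨h1.symm, h2⟩)
        rw [if_neg h2]
        simp
      · rw [if_neg h1]
        simp
    · intro h
      exact absurd (Finset.mem_univ (k, l)) h
  rw [hg, mul_zero, zero_mul] at hmul
  have := hmul.symm
  rcases smul_eq_zero.mp this with h | h
  · exact h
  · exact absurd h (hABA k l)

theorem stmt_2 (d : ℕ) (F V : Type*) [Field F] [AddCommGroup V] [Module F V]
    [FiniteDimensional F V] (hdim : Module.finrank F V = d + 1)
    (E Es : Fin (d + 1) → Module.End F V)
    (hE : ∀ i j, E i * E j = if i = j then E i else 0)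
    (hErk : ∀ i, Module.finrank F (LinearMap.range (E i)) = 1)
    (hEs : ∀ i j, Es i * Es j = if i = j then Es i else 0)
    (hEsrk : ∀ i, Module.finrank F (LinearMap.range (Es i)) = 1)
    (hnz : ∀ i, E 0 * Es i * E 0 ≠ 0)
    (hnzs : ∀ i, Es 0 * E i * Es 0 ≠ 0) :
    (LinearIndependent F (fun ij : Fin (d + 1) × Fin (d + 1) => E ij.1 * Es 0 * E ij.2) ∧
        Submodule.span F (Set.range (fun ij : Fin (d + 1) × Fin (d + 1) => E ij.1 * Es 0 * E ij.2)) = ⊤) ∧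
      (LinearIndependent F (fun ij : Fin (d + 1) × Fin (d + 1) => Es ij.1 * E 0 * Es ij.2) ∧
        Submodule.span F (Set.range (fun ij : Fin (d + 1) × Fin (d + 1) => Es ij.1 * E 0 * Es ij.2)) = ⊤) := by
  have hBs : Es 0 * Es 0 = Es 0 := by rw [hEs 0 0]; simp
  have hB : E 0 * E 0 = E 0 := by rw [hE 0 0]; simp
  have hli1 := key_li E hE (Es 0) hBs (hEsrk 0) hnzs
  have hli2 := key_li Es hEs (E 0) hB (hErk 0) hnz
  have hcard : Fintype.card (Fin (d + 1) × Fin (d + 1)) = finrank F (Module.End F V) := by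
    rw [show finrank F (Module.End F V) = finrank F (V →ₗ[F] V) from rfl,
      Module.finrank_linearMap, hdim]
    simp [Fintype.card_prod]
  have hspan1 : Submodule.span F (Set.range
      (fun ij : Fin (d + 1) × Fin (d + 1) => E ij.1 * Es 0 * E ij.2)) = ⊤ := by
    have hb := (basisOfLinearIndependentOfCardEqFinrank hli1 hcard).span_eq
    rwa [coe_basisOfLinearIndependentOfCardEqFinrank] at hb
  have hspan2 : Submodule.span F (Set.range
      (fun ij : Fin (d + 1) × Fin (d + 1) => Es ij.1 * E 0 * Es ij.2)) = ⊤ := by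
    have hb := (basisOfLinearIndependentOfCardEqFinrank hli2 hcard).span_eq
    rwa [coe_basisOfLinearIndependentOfCardEqFinrank] at hb
  exact ⟨⟨hli1, hspan1⟩, ⟨hli2, hspan2⟩⟩
end

section
/- Let Φ = ({E_i}_{i=0}^d; {E*_i}_{i=0}^d) be an idempotent system on V that is symmetric, and let † be an antiautomorphism of End(V) fixing each of E_i, E*_i for 0 ≤ i ≤ d. Then † is unique (any antiautomorphism of End(V) fixing each E_i and each E*_i equals †), and (A^†)^† = A for all A ∈ End(V). -/
theorem stmt_3 (d : ℕ) (F V : Type*) [Field F] [AddCommGroup V] [Module F V]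
    [FiniteDimensional F V] (hdim : Module.finrank F V = d + 1)
    (E Es : Fin (d + 1) → Module.End F V)
    (hE : ∀ i j, E i * E j = if i = j then E i else 0)
    (hErk : ∀ i, Module.finrank F (LinearMap.range (E i)) = 1)
    (hEs : ∀ i j, Es i * Es j = if i = j then Es i else 0)
    (hEsrk : ∀ i, Module.finrank F (LinearMap.range (Es i)) = 1)
    (hnz : ∀ i, E 0 * Es i * E 0 ≠ 0)
    (hnzs : ∀ i, Es 0 * E i * Es 0 ≠ 0)
    (dag : Module.End F V ≃ₗ[F] Module.End F V)
    (hdagmul : ∀ Y Z, dag (Y * Z) = dag Z * dag Y)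
    (hdagE : ∀ i, dag (E i) = E i)
    (hdagEs : ∀ i, dag (Es i) = Es i) :
    (∀ mu : Module.End F V ≃ₗ[F] Module.End F V,
        (∀ Y Z, mu (Y * Z) = mu Z * mu Y) → (∀ i, mu (E i) = E i) → (∀ i, mu (Es i) = Es i) →
        ∀ X, mu X = dag X) ∧
      (∀ X : Module.End F V, dag (dag X) = X) := by
  classical
  -- a nonzero vector in range (Es 0)
  obtain ⟨v, hvmem, hvne⟩ : ∃ v ∈ LinearMap.range (Es 0), v ≠ 0 := by
    apply Submodule.exists_mem_ne_zero_of_ne_bot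
    intro h
    have h1 := hEsrk 0
    rw [h] at h1
    simp at h1
  have hrange : LinearMap.range (Es 0) = Submodule.span F {v} := by
    refine (Submodule.eq_of_le_of_finrank_le (Submodule.span_le.mpr ?_) ?_).symm
    · simpa using hvmem
    · rw [hEsrk 0, finrank_span_singleton hvne]
  have hEs0x : ∀ x : V, ∃ a : F, Es 0 x = a • v := by
    intro x
    have hx : Es 0 x ∈ LinearMap.range (Es 0) := ⟨x, rfl⟩
    rw [hrange, Submodule.mem_span_singleton] at hx
    obtain ⟨a, ha⟩ := hx
    exact ⟨a, ha.symm⟩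
  choose cf hcf using fun i => hEs0x (E i v)
  have hcne : ∀ i, cf i ≠ 0 := by
    intro i h
    apply hnzs i
    ext x
    obtain ⟨a, ha⟩ := hEs0x x
    simp [Module.End.mul_apply, ha, hcf i, h]
  have hvine : ∀ i, E i v ≠ 0 := by
    intro i h
    apply hcne i
    have h1 := hcf i
    rw [h, map_zero] at h1
    rcases smul_eq_zero.mp h1.symm with h2 | h2
    · exact h2
    · exact absurd h2 hvne
  have hEmul : ∀ j i (x : V), E j (E i x) = if j = i then E j x else 0 := by
    intro j i x
    have h1 : (E j * E i) x = ((if j = i then E j else 0) : Module.End F V) x := by rw [hE]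
    by_cases h : j = i
    · simpa [h, Module.End.mul_apply] using h1
    · simpa [h, Module.End.mul_apply] using h1
  have li : LinearIndependent F (fun i : Fin (d + 1) => E i v) := by
    rw [Fintype.linearIndependent_iff]
    intro g hg j
    have h1 := congrArg (E j) hg
    rw [map_sum, map_zero] at h1
    simp only [map_smul, hEmul, smul_ite, smul_zero] at h1
    rw [Finset.sum_ite_eq (Finset.univ) j (fun i => g i • E j v)] at h1
    simp at h1
    rcases h1 with h2 | h2
    · exact h2
    · exact absurd h2 (hvine j)
  have hcard : Fintype.card (Fin (d + 1)) = Module.finrank F V := by simp [hdim]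
  let B := basisOfLinearIndependentOfCardEqFinrank li hcard
  have hB : ∀ i, B i = E i v := fun i =>
    congrFun (coe_basisOfLinearIndependentOfCardEqFinrank li hcard) i
  set u : Fin (d + 1) × Fin (d + 1) → Module.End F V :=
    fun p => E p.1 * Es 0 * E p.2 with hu
  have huapp : ∀ i j k, (u (i, j)) (E k v) = if j = k then cf j • E i v else 0 := by
    intro i j k
    show (E i * Es 0 * E j) (E k v) = _
    rw [Module.End.mul_apply, Module.End.mul_apply, hEmul j k]
    by_cases h : j = k
    · subst h
      rw [if_pos rfl, if_pos rfl, hcf j, map_smul]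
    · simp [h]
  have hspan : ∀ X : Module.End F V, X ∈ Submodule.span F (Set.range u) := by
    intro X
    have hXeq : X = ∑ p : Fin (d + 1) × Fin (d + 1),
        ((cf p.2)⁻¹ * B.repr (X (E p.2 v)) p.1) • u p := by
      refine B.ext fun k => ?_
      rw [hB k, LinearMap.sum_apply]
      simp only [LinearMap.smul_apply]
      rw [Fintype.sum_prod_type]
      have hterm : ∀ i j, ((cf j)⁻¹ * B.repr (X (E j v)) i) • (u (i, j)) (E k v)
          = if j = k then B.repr (X (E k v)) i • E i v else 0 := by
        intro i j
        rw [huapp i j k]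
        by_cases h : j = k
        · subst h
          rw [if_pos rfl, if_pos rfl, smul_smul, mul_right_comm,
            inv_mul_cancel₀ (hcne j), one_mul]
        · rw [if_neg h, if_neg h, smul_zero]
      simp only [hterm, Finset.sum_ite_eq' Finset.univ, Finset.mem_univ, if_true]
      have hsum := B.sum_repr (X (E k v))
      simp only [hB] at hsum
      exact hsum.symm
    rw [hXeq]
    exact Submodule.sum_mem _ fun p _ =>
      Submodule.smul_mem _ _ (Submodule.subset_span (Set.mem_range_self p))
  have key : ∀ f g : Module.End F V →ₗ[F] Module.End F V,
      (∀ p, f (u p) = g (u p)) → ∀ X, f X = g X := by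
    intro f g h X
    refine Submodule.span_induction ?_ ?_ ?_ ?_ (hspan X)
    · rintro x ⟨p, rfl⟩
      exact h p
    · simp
    · intro a b _ _ ha hb
      simp [map_add, ha, hb]
    · intro r a _ ha
      simp [map_smul, ha]
  constructor
  · intro mu hmul hmuE hmuEs X
    refine key mu.toLinearMap dag.toLinearMap (fun p => ?_) X
    show mu (E p.1 * Es 0 * E p.2) = dag (E p.1 * Es 0 * E p.2)
    simp only [hmul, hmuE, hmuEs, hdagmul, hdagE, hdagEs]
  · intro X
    have := key (dag.toLinearMap ∘ₗ dag.toLinearMap) LinearMap.id (fun p => ?_) X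
    · simpa using this
    · show dag (dag (E p.1 * Es 0 * E p.2)) = E p.1 * Es 0 * E p.2
      simp only [hdagmul, hdagE, hdagEs]
end

section
/- Let Φ = ({E_i}_{i=0}^d; {E*_i}_{i=0}^d) be a symmetric idempotent system on V, and let M denote the F-linear span of {E_i}_{i=0}^d in End(V). Then for each 0 ≤ i ≤ d there exists a unique element A_i ∈ M such that A_i E*_0 E_0 = E*_i E_0. Moreover A_0 = I, and the elements {A_i}_{i=0}^d form a basis of the F-vector space M. -/
section Aux
variable {F V : Type*} [Field F] [AddCommGroup V] [Module F V]

/-- For a rank-1 idempotent `f`, there is `u ≠ 0` with `f u = u` and every `f v` a multiple of `u`. -/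
lemma aux_pick (f : Module.End F V) (hf : f * f = f)
    (hrk : Module.finrank F (LinearMap.range f) = 1) :
    ∃ u : V, u ≠ 0 ∧ f u = u ∧ ∀ v : V, ∃ a : F, f v = a • u := by
  obtain ⟨⟨u, hu⟩, hu0, hspan⟩ := finrank_eq_one_iff'.mp hrk
  obtain ⟨w, hw⟩ := hu
  have hfu : f u = u := by
    have : (f * f) w = f w := by rw [hf]
    simpa [Module.End.mul_apply, hw] using this
  refine ⟨u, fun h => hu0 (by simp [h]), hfu, fun v => ?_⟩
  obtain ⟨a, ha⟩ := hspan ⟨f v, ⟨v, rfl⟩⟩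
  exact ⟨a, by simpa using congrArg (Subtype.val) ha.symm⟩

/-- Two vectors in a rank-1 range, the second nonzero, are proportional. -/
lemma aux_prop (f : Module.End F V) (hrk : Module.finrank F (LinearMap.range f) = 1)
    {x y : V} (hx : x ∈ LinearMap.range f) (hy : y ∈ LinearMap.range f) (hy0 : y ≠ 0) :
    ∃ c : F, x = c • y := by
  have := (finrank_eq_one_iff_of_nonzero' (⟨y, hy⟩ : LinearMap.range f)
    (by simpa using hy0)).mp hrk ⟨x, hx⟩
  obtain ⟨c, hc⟩ := this
  exact ⟨c, by simpa using congrArg (Subtype.val) hc.symm⟩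

lemma aux_B (e f X Y : Module.End F V) (hf : f * f = f)
    (herk : Module.finrank F (LinearMap.range e) = 1)
    (hfrk : Module.finrank F (LinearMap.range f) = 1)
    (hY : e * Y * f ≠ 0) : ∃ c : F, e * X * f = c • (e * Y * f) := by
  obtain ⟨u, hu0, hfu, hall⟩ := aux_pick f hf hfrk
  have key : ∀ Z : Module.End F V, ∀ v : V, ∃ a : F, (e * Z * f) v = a • e (Z u) := by
    intro Z v
    obtain ⟨a, ha⟩ := hall v
    exact ⟨a, by simp [Module.End.mul_apply, ha]⟩
  have hYu : e (Y u) ≠ 0 := by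
    intro h
    apply hY
    ext v
    obtain ⟨a, ha⟩ := key Y v
    simp [ha, h]
  obtain ⟨c, hc⟩ := aux_prop e herk (x := e (X u)) (y := e (Y u)) ⟨X u, rfl⟩ ⟨Y u, rfl⟩ hYu
  refine ⟨c, ?_⟩
  ext v
  obtain ⟨a, ha⟩ := key X v
  obtain ⟨a', ha'⟩ := key Y v
  -- need the same a for both; recompute
  obtain ⟨b, hb⟩ := hall v
  have hX : (e * X * f) v = b • e (X u) := by simp [Module.End.mul_apply, hb]
  have hY' : (e * Y * f) v = b • e (Y u) := by simp [Module.End.mul_apply, hb]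
  rw [LinearMap.smul_apply, hX, hY', hc, smul_comm]

end Aux
theorem stmt_4 (d : ℕ) (F V : Type*) [Field F] [AddCommGroup V] [Module F V]
    [FiniteDimensional F V] (hdim : Module.finrank F V = d + 1)
    (E Es : Fin (d + 1) → Module.End F V)
    (hE : ∀ i j, E i * E j = if i = j then E i else 0)
    (hErk : ∀ i, Module.finrank F (LinearMap.range (E i)) = 1)
    (hEs : ∀ i j, Es i * Es j = if i = j then Es i else 0)
    (hEsrk : ∀ i, Module.finrank F (LinearMap.range (Es i)) = 1)
    (hnz : ∀ i, E 0 * Es i * E 0 ≠ 0)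
    (hnzs : ∀ i, Es 0 * E i * Es 0 ≠ 0)
    (dag : Module.End F V ≃ₗ[F] Module.End F V)
    (hdagmul : ∀ Y Z, dag (Y * Z) = dag Z * dag Y)
    (hdagE : ∀ i, dag (E i) = E i)
    (hdagEs : ∀ i, dag (Es i) = Es i) :
    (∀ i, ∃! Ai : Module.End F V,
        Ai ∈ Submodule.span F (Set.range E) ∧ Ai * (Es 0 * E 0) = Es i * E 0) ∧
      (∀ A : Fin (d + 1) → Module.End F V,
        (∀ i, A i ∈ Submodule.span F (Set.range E) ∧ A i * (Es 0 * E 0) = Es i * E 0) →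
        A 0 = 1 ∧ LinearIndependent F A ∧
          Submodule.span F (Set.range A) = Submodule.span F (Set.range E)) := by
  classical
  have hEi : ∀ i, E i * E i = E i := fun i => by simpa using hE i i
  have hEsi : ∀ i, Es i * Es i = Es i := fun i => by simpa using hEs i i
  -- pick spanning vectors of range (E i)
  choose u hu0 hEu ha using fun i => aux_pick (E i) (hEi i) (hErk i)
  have hEu' : ∀ i j, i ≠ j → E i (u j) = 0 := by
    intro i j hij
    have h1 : (E i * E j) (u j) = 0 := by rw [hE i j, if_neg hij]; rfl
    rw [Module.End.mul_apply, hEu j] at h1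
    exact h1
  have hulin : LinearIndependent F u := by
    rw [Fintype.linearIndependent_iff]
    intro c hc i
    have h1 := congrArg (E i) hc
    rw [map_sum, map_zero] at h1
    rw [Finset.sum_eq_single i (fun j _ hj => by
      rw [map_smul, hEu' i j (Ne.symm hj), smul_zero]) (by simp)] at h1
    rw [map_smul, hEu i] at h1
    exact (smul_eq_zero.mp h1).resolve_right (hu0 i)
  have hspanu : Submodule.span F (Set.range u) = ⊤ :=
    Submodule.eq_top_of_finrank_eq (by rw [finrank_span_eq_card hulin, Fintype.card_fin, hdim])
  have hone : (∑ j, E j) = 1 := by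
    apply LinearMap.ext_on hspanu
    rintro _ ⟨j, rfl⟩
    rw [LinearMap.sum_apply]
    rw [Finset.sum_eq_single j (fun i _ hi => hEu' i j hi) (by simp)]
    rw [hEu j]
    rfl
  have hEs0E0 : ∀ j, Es j * E 0 ≠ 0 := by
    intro j h
    exact hnz j (by rw [mul_assoc, h, mul_zero])
  have hEs0ne : Es 0 * (1 : Module.End F V) * Es 0 ≠ 0 := by
    intro h
    rw [mul_one, hEsi 0] at h
    exact hnz 0 (by rw [h, mul_zero, zero_mul])
  have hkey : ∀ j, E j * (Es 0 * E 0) ≠ 0 := by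
    intro j h0
    obtain ⟨c, hc⟩ := aux_B (Es 0) (Es 0) (E j) 1 (hEsi 0) (hEsrk 0) (hEsrk 0) hEs0ne
    rw [mul_one, hEsi 0] at hc
    have hcne : c ≠ 0 := by
      intro h
      exact hnzs j (by rw [hc, h, zero_smul])
    have h1 : Es 0 * (E j * (Es 0 * E 0)) = c • (Es 0 * E 0) := by
      calc Es 0 * (E j * (Es 0 * E 0)) = (Es 0 * E j * Es 0) * E 0 := by simp only [mul_assoc]
      _ = c • (Es 0 * E 0) := by rw [hc, smul_mul_assoc]
    rw [h0, mul_zero] at h1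
    exact hEs0E0 0 (by
      have := (smul_eq_zero.mp h1.symm).resolve_left hcne
      exact this)
  -- multiplication of E j into a span element
  have hmulE : ∀ (j : Fin (d + 1)) (c : Fin (d + 1) → F),
      E j * (∑ k, c k • E k) = c j • E j := by
    intro j c
    rw [Finset.mul_sum]
    rw [Finset.sum_eq_single j (fun k _ hk => by
      rw [mul_smul_comm, hE j k, if_neg (Ne.symm hk), smul_zero]) (by simp)]
    rw [mul_smul_comm, hE j j, if_pos rfl]
  have hinj : ∀ x ∈ Submodule.span F (Set.range E), x * (Es 0 * E 0) = 0 → x = 0 := by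
    intro x hx hx0
    obtain ⟨c, rfl⟩ := (Submodule.mem_span_range_iff_exists_fun F).mp hx
    have hc0 : ∀ j, c j = 0 := by
      intro j
      have h1 : E j * ((∑ k, c k • E k) * (Es 0 * E 0)) = c j • (E j * (Es 0 * E 0)) := by
        rw [← mul_assoc, hmulE j c, smul_mul_assoc]
      rw [hx0, mul_zero] at h1
      exact ((smul_eq_zero.mp h1.symm).resolve_right (hkey j))
    simp [hc0]
  have hex : ∀ i, ∃ Ai, Ai ∈ Submodule.span F (Set.range E) ∧
      Ai * (Es 0 * E 0) = Es i * E 0 := by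
    intro i
    have hc := fun j => aux_B (E j) (E 0) (Es i) (Es 0) (hEi 0) (hErk j) (hErk 0)
      (by rw [mul_assoc]; exact hkey j)
    choose cf hcf using hc
    refine ⟨∑ j, cf j • E j, ?_, ?_⟩
    · exact Submodule.sum_mem _ fun j _ =>
        Submodule.smul_mem _ _ (Submodule.subset_span ⟨j, rfl⟩)
    · rw [Finset.sum_mul]
      have : ∀ j ∈ Finset.univ, (cf j • E j) * (Es 0 * E 0) = E j * Es i * E 0 := by
        intro j _
        rw [smul_mul_assoc, ← mul_assoc, ← hcf j]
      rw [Finset.sum_congr rfl this]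
      calc ∑ j, E j * Es i * E 0 = (∑ j, E j) * (Es i * E 0) := by
            rw [Finset.sum_mul]; exact Finset.sum_congr rfl fun j _ => by rw [mul_assoc]
      _ = Es i * E 0 := by rw [hone, one_mul]
  have huniq : ∀ i (y z : Module.End F V),
      (y ∈ Submodule.span F (Set.range E) ∧ y * (Es 0 * E 0) = Es i * E 0) →
      (z ∈ Submodule.span F (Set.range E) ∧ z * (Es 0 * E 0) = Es i * E 0) → y = z := by
    intro i y z hy hz
    have h1 : (y - z) * (Es 0 * E 0) = 0 := by rw [sub_mul, hy.2, hz.2, sub_self]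
    have h2 := hinj (y - z) (Submodule.sub_mem _ hy.1 hz.1) h1
    exact sub_eq_zero.mp h2
  have hone_mem : (1 : Module.End F V) ∈ Submodule.span F (Set.range E) := by
    rw [← hone]
    exact Submodule.sum_mem _ fun j _ => Submodule.subset_span ⟨j, rfl⟩
  constructor
  · intro i
    obtain ⟨Ai, h1, h2⟩ := hex i
    exact ⟨Ai, ⟨h1, h2⟩, fun y hy => huniq i y Ai hy ⟨h1, h2⟩⟩
  · intro A hA
    have hA0 : A 0 = 1 := huniq 0 (A 0) 1 (hA 0) ⟨hone_mem, by rw [one_mul]⟩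
    have hAlin : LinearIndependent F A := by
      rw [Fintype.linearIndependent_iff]
      intro c hc j
      have h1 : (∑ i, c i • A i) * (Es 0 * E 0) = ∑ i, c i • (Es i * E 0) := by
        rw [Finset.sum_mul]
        exact Finset.sum_congr rfl fun i _ => by rw [smul_mul_assoc, (hA i).2]
      rw [hc, zero_mul] at h1
      have h2 := congrArg (fun X => Es j * X) h1.symm
      simp only [mul_zero, Finset.mul_sum] at h2
      have h3 : ∀ i ∈ Finset.univ, Es j * (c i • (Es i * E 0)) =
          c i • ((if j = i then Es j else 0) * E 0) := by
        intro i _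
        rw [mul_smul_comm, ← mul_assoc, hEs j i]
      rw [Finset.sum_congr rfl h3] at h2
      rw [Finset.sum_eq_single j (fun i _ hi => by rw [if_neg (Ne.symm hi), zero_mul, smul_zero])
        (by simp)] at h2
      rw [if_pos rfl] at h2
      exact (smul_eq_zero.mp h2).resolve_right (hEs0E0 j)
    refine ⟨hA0, hAlin, ?_⟩
    have hle : Submodule.span F (Set.range A) ≤ Submodule.span F (Set.range E) := by
      rw [Submodule.span_le]
      rintro _ ⟨i, rfl⟩
      exact (hA i).1
    refine Submodule.eq_of_le_of_finrank_le hle ?_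
    rw [finrank_span_eq_card hAlin, Fintype.card_fin]
    have := finrank_range_le_card (R := F) E
    rw [Fintype.card_fin] at this
    exact this
end

section
/- Let Φ = ({E_i}_{i=0}^d; {E*_i}_{i=0}^d) be a symmetric idempotent system on V, and set ν = tr(E_0 E*_0)^{-1}. Then ∑_{i=0}^d A_i = ν E_0. -/
open Module LinearMap

lemma corner_lemma {F V : Type*} [Field F] [AddCommGroup V] [Module F V]
    [FiniteDimensional F V] (P T : Module.End F V) (hP : P * P = P)
    (hrk : Module.finrank F (LinearMap.range P) = 1) :
    P * T * P = (LinearMap.trace F V (T * P)) • P := by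
  have hproj : LinearMap.IsProj (LinearMap.range P) P := by
    constructor
    · intro x; exact LinearMap.mem_range_self P x
    · rintro x ⟨w, rfl⟩
      exact congrArg (fun f => f w) hP
  obtain ⟨v, hv0, hvall⟩ := finrank_eq_one_iff'.mp hrk
  set x : V := (v : V) with hxdef
  have hx0 : x ≠ 0 := fun h => hv0 (Subtype.ext h)
  obtain ⟨c, hc⟩ := hvall ⟨P (T x), LinearMap.mem_range_self P _⟩
  have hc' : P (T x) = c • x := by
    have := congrArg (Subtype.val) hc
    simpa using this.symm
  have key : P * T * P = c • P := by
    ext w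
    obtain ⟨a, ha⟩ := hvall ⟨P w, LinearMap.mem_range_self P w⟩
    have ha' : P w = a • x := by
      have := congrArg (Subtype.val) ha
      simpa using this.symm
    simp only [Module.End.mul_apply, LinearMap.smul_apply, ha', map_smul, hc']
    rw [smul_comm]
  have htrP : LinearMap.trace F V P = 1 := by
    rw [hproj.trace, hrk]; norm_num
  have : LinearMap.trace F V (P * T * P) = LinearMap.trace F V (T * P) := by
    rw [LinearMap.trace_mul_comm F (P * T) P, ← mul_assoc, hP, LinearMap.trace_mul_comm]
  rw [key] at this
  rw [map_smul, smul_eq_mul, htrP, mul_one] at this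
  rw [key, this]

lemma sum_eq_one_lemma {d : ℕ} {F V : Type*} [Field F] [AddCommGroup V] [Module F V]
    [FiniteDimensional F V] (hdim : Module.finrank F V = d + 1)
    (Es : Fin (d + 1) → Module.End F V)
    (hEs : ∀ i j, Es i * Es j = if i = j then Es i else 0)
    (hEsrk : ∀ i, Module.finrank F (LinearMap.range (Es i)) = 1) :
    ∑ i, Es i = 1 := by
  have hex : ∀ i, ∃ x : V, x ∈ LinearMap.range (Es i) ∧ x ≠ 0 := by
    intro i
    obtain ⟨v, hv0, -⟩ := finrank_eq_one_iff'.mp (hEsrk i)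
    exact ⟨(v : V), v.2, fun h => hv0 (Subtype.ext h)⟩
  choose x hxmem hx0 using hex
  have hact : ∀ i j, Es j (x i) = if j = i then x i else 0 := by
    intro i j
    obtain ⟨w, hw⟩ := hxmem i
    have : Es j (x i) = (Es j * Es i) w := by rw [Module.End.mul_apply, hw]
    rw [this, hEs j i]
    split
    next h => subst h; exact hw
    next h => rfl
  have li : LinearIndependent F x := by
    rw [Fintype.linearIndependent_iff]
    intro g hg j
    have := congrArg (fun w => Es j w) hg
    simp only [map_sum, map_smul, map_zero, hact] at this
    simp only [smul_ite, smul_zero] at this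
    rw [Finset.sum_ite_eq Finset.univ j (fun i => g i • x i)] at this
    simp only [Finset.mem_univ, if_true] at this
    exact (smul_eq_zero.mp this).resolve_right (hx0 j)
  have hcard : Fintype.card (Fin (d + 1)) = Module.finrank F V := by
    simp [hdim]
  let b := basisOfLinearIndependentOfCardEqFinrank li hcard
  have hb : ∀ i, b i = x i := fun i => congrFun (coe_basisOfLinearIndependentOfCardEqFinrank li hcard) i
  apply b.ext
  intro i
  rw [hb]
  simp only [LinearMap.coe_sum, Finset.sum_apply, hact, Module.End.one_apply]
  simp

theorem stmt_5 (d : ℕ) (F V : Type*) [Field F] [AddCommGroup V] [Module F V]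
    [FiniteDimensional F V] (hdim : Module.finrank F V = d + 1)
    (E Es : Fin (d + 1) → Module.End F V)
    (hE : ∀ i j, E i * E j = if i = j then E i else 0)
    (hErk : ∀ i, Module.finrank F (LinearMap.range (E i)) = 1)
    (hEs : ∀ i j, Es i * Es j = if i = j then Es i else 0)
    (hEsrk : ∀ i, Module.finrank F (LinearMap.range (Es i)) = 1)
    (hnz : ∀ i, E 0 * Es i * E 0 ≠ 0)
    (hnzs : ∀ i, Es 0 * E i * Es 0 ≠ 0)
    (dag : Module.End F V ≃ₗ[F] Module.End F V)
    (hdagmul : ∀ Y Z, dag (Y * Z) = dag Z * dag Y)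
    (hdagE : ∀ i, dag (E i) = E i)
    (hdagEs : ∀ i, dag (Es i) = Es i)
    (A : Fin (d + 1) → Module.End F V)
    (hAmem : ∀ i, A i ∈ Submodule.span F (Set.range E))
    (hAdef : ∀ i, A i * (Es 0 * E 0) = Es i * E 0)
    (ν : F) (htr : LinearMap.trace F V (E 0 * Es 0) ≠ 0)
    (hν : ν = (LinearMap.trace F V (E 0 * Es 0))⁻¹) :
    ∑ i, A i = ν • E 0 := by
  set s := LinearMap.trace F V (E 0 * Es 0) with hs
  -- basic idempotent facts
  have hE0idem : E 0 * E 0 = E 0 := by rw [hE 0 0]; simp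
  have hEs0idem : Es 0 * Es 0 = Es 0 := by rw [hEs 0 0]; simp
  have hEne : ∀ k, E k ≠ 0 := by
    intro k h
    have := hErk k
    rw [h] at this
    rw [LinearMap.range_zero, finrank_bot] at this
    exact zero_ne_one this
  -- sum of Es is 1
  have hsum1 : ∑ i, Es i = 1 := sum_eq_one_lemma hdim Es hEs hEsrk
  -- corner facts
  have hcorner0 : E 0 * Es 0 * E 0 = s • E 0 := by
    have := corner_lemma (E 0) (Es 0) hE0idem (hErk 0)
    rwa [LinearMap.trace_mul_comm] at this
  have hcornerEs : Es 0 * E 0 * Es 0 = s • Es 0 := by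
    have := corner_lemma (Es 0) (E 0) hEs0idem (hEsrk 0)
    rwa [← hs] at this
  have hcornerk : ∀ k, E k * Es 0 * E k = (LinearMap.trace F V (E k * Es 0)) • E k := by
    intro k
    have hEkidem : E k * E k = E k := by rw [hE k k]; simp
    have := corner_lemma (E k) (Es 0) hEkidem (hErk k)
    rwa [LinearMap.trace_mul_comm] at this
  have htk : ∀ k, LinearMap.trace F V (E k * Es 0) ≠ 0 := by
    intro k h
    apply hnzs k
    have := corner_lemma (Es 0) (E k) hEs0idem (hEsrk 0)
    rw [this, h, zero_smul]
  -- B and its span representation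
  set B := ∑ i, A i with hB
  have hBmem : B ∈ Submodule.span F (Set.range E) :=
    Submodule.sum_mem _ (fun i _ => hAmem i)
  obtain ⟨cc, hcc⟩ := (Submodule.mem_span_range_iff_exists_fun F).mp hBmem
  -- B * (Es 0 * E 0) = E 0
  have hBeq : B * (Es 0 * E 0) = E 0 := by
    rw [hB, Finset.sum_mul]
    simp_rw [hAdef]
    rw [← Finset.sum_mul, hsum1, one_mul]
  -- E k * B = cc k • E k
  have hEkB : ∀ k, E k * B = cc k • E k := by
    intro k
    rw [← hcc, Finset.mul_sum]
    simp_rw [mul_smul_comm, hE, smul_ite, smul_zero]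
    rw [Finset.sum_ite_eq Finset.univ k (fun j => cc j • E k)]
    simp
  -- key equation for each k
  have hkey : ∀ k, cc k • (E k * Es 0 * E 0) = E k * E 0 := by
    intro k
    have : E k * (B * (Es 0 * E 0)) = E k * E 0 := by rw [hBeq]
    rw [← mul_assoc, hEkB k, smul_mul_assoc] at this
    rw [mul_assoc]
    exact this
  -- cc k = 0 for k ≠ 0
  have hck0 : ∀ k, k ≠ 0 → cc k = 0 := by
    intro k hk
    have h1 : cc k • (E k * Es 0 * E 0) = 0 := by
      rw [hkey k, hE k 0, if_neg hk]
    have h2 : cc k • (E k * Es 0 * E 0 * (Es 0 * E k)) = 0 := by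
      rw [← smul_mul_assoc, h1, zero_mul]
    have h3 : E k * Es 0 * E 0 * (Es 0 * E k)
        = (s * LinearMap.trace F V (E k * Es 0)) • E k := by
      calc E k * Es 0 * E 0 * (Es 0 * E k)
          = E k * (Es 0 * E 0 * Es 0) * E k := by simp only [mul_assoc]
        _ = E k * (s • Es 0) * E k := by rw [hcornerEs]
        _ = s • (E k * Es 0 * E k) := by
            rw [mul_smul_comm, smul_mul_assoc]
        _ = s • (LinearMap.trace F V (E k * Es 0)) • E k := by rw [hcornerk k]
        _ = (s * LinearMap.trace F V (E k * Es 0)) • E k := by rw [smul_smul]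
    rw [h3, smul_smul] at h2
    have := (smul_eq_zero.mp h2).resolve_right (hEne k)
    rcases mul_eq_zero.mp this with h | h
    · exact h
    · exact absurd h (mul_ne_zero htr (htk k))
  -- cc 0 = ν
  have hc0 : cc 0 = ν := by
    have h1 : cc 0 • (E 0 * Es 0 * E 0) = E 0 := by
      rw [hkey 0, hE 0 0, if_pos rfl]
    rw [hcorner0, smul_smul] at h1
    have : (cc 0 * s - 1) • E 0 = 0 := by
      rw [sub_smul, one_smul, h1, sub_self]
    have h2 := (smul_eq_zero.mp this).resolve_right (hEne 0)
    have h3 : cc 0 * s = 1 := sub_eq_zero.mp h2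
    rw [hν]
    exact eq_inv_of_mul_eq_one_left h3
  -- conclude
  rw [← hcc, Finset.sum_eq_single 0 (fun j _ hj => by rw [hck0 j hj, zero_smul])
    (fun h => absurd (Finset.mem_univ 0) h), hc0]
end

section
/- Let Φ = ({E_i}_{i=0}^d; {E*_i}_{i=0}^d) be a symmetric idempotent system on V, and set ν = tr(E_0 E*_0)^{-1}. For 0 ≤ i ≤ d let k_i denote the eigenvalue of A_i corresponding to E_0, i.e. A_i E_0 = k_i E_0. Then k_i = ν tr(E_0 E*_i) for 0 ≤ i ≤ d; moreover k_i ≠ 0 for 0 ≤ i ≤ d, ∑_{i=0}^d k_i = ν, and k_0 = 1. -/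
theorem stmt_6 (d : ℕ) (F V : Type*) [Field F] [AddCommGroup V] [Module F V]
    [FiniteDimensional F V] (hdim : Module.finrank F V = d + 1)
    (E Es : Fin (d + 1) → Module.End F V)
    (hE : ∀ i j, E i * E j = if i = j then E i else 0)
    (hErk : ∀ i, Module.finrank F (LinearMap.range (E i)) = 1)
    (hEs : ∀ i j, Es i * Es j = if i = j then Es i else 0)
    (hEsrk : ∀ i, Module.finrank F (LinearMap.range (Es i)) = 1)
    (hnz : ∀ i, E 0 * Es i * E 0 ≠ 0)
    (hnzs : ∀ i, Es 0 * E i * Es 0 ≠ 0)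
    (dag : Module.End F V ≃ₗ[F] Module.End F V)
    (hdagmul : ∀ Y Z, dag (Y * Z) = dag Z * dag Y)
    (hdagE : ∀ i, dag (E i) = E i)
    (hdagEs : ∀ i, dag (Es i) = Es i)
    (A : Fin (d + 1) → Module.End F V)
    (hAmem : ∀ i, A i ∈ Submodule.span F (Set.range E))
    (hAdef : ∀ i, A i * (Es 0 * E 0) = Es i * E 0)
    (ν : F) (htr : LinearMap.trace F V (E 0 * Es 0) ≠ 0)
    (hν : ν = (LinearMap.trace F V (E 0 * Es 0))⁻¹)
    (k : Fin (d + 1) → F) (hk : ∀ i, A i * E 0 = k i • E 0) :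
    (∀ i, k i = ν * LinearMap.trace F V (E 0 * Es i)) ∧
      (∀ i, k i ≠ 0) ∧ (∑ i, k i = ν) ∧ k 0 = 1 := by
  -- dag fixes each A i
  have hdagA : ∀ i, dag (A i) = A i := by
    intro i
    refine Submodule.span_induction ?_ ?_ ?_ ?_ (hAmem i)
    · rintro x ⟨j, rfl⟩; exact hdagE j
    · exact map_zero _
    · intro x y _ _ hx hy; rw [map_add, hx, hy]
    · intro a x _ hx; rw [map_smul, hx]
  -- E 0 * A i = k i • E 0
  have hE0A : ∀ i, E 0 * A i = k i • E 0 := by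
    intro i
    have h := congrArg dag (hk i)
    rw [hdagmul, hdagA, hdagE, map_smul, hdagE] at h
    exact h
  -- the key identity
  have key : ∀ i, E 0 * Es i * E 0 = k i • (E 0 * Es 0 * E 0) := by
    intro i
    calc E 0 * Es i * E 0 = E 0 * (Es i * E 0) := by rw [mul_assoc]
    _ = E 0 * (A i * (Es 0 * E 0)) := by rw [hAdef]
    _ = (E 0 * A i) * (Es 0 * E 0) := by rw [mul_assoc]
    _ = (k i • E 0) * (Es 0 * E 0) := by rw [hE0A]
    _ = k i • (E 0 * Es 0 * E 0) := by rw [smul_mul_assoc, mul_assoc]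
  -- trace of E0 * Es i * E0 equals trace of E0 * Es i
  have htrcyc : ∀ (B : Module.End F V),
      LinearMap.trace F V (E 0 * B * E 0) = LinearMap.trace F V (E 0 * B) := by
    intro B
    rw [LinearMap.trace_mul_comm, ← mul_assoc, show E 0 * E 0 = E 0 by
      simpa using hE 0 0]
  have htrk : ∀ i, LinearMap.trace F V (E 0 * Es i)
      = k i * LinearMap.trace F V (E 0 * Es 0) := by
    intro i
    rw [← htrcyc (Es i), key i, map_smul, htrcyc, smul_eq_mul]
  have part1 : ∀ i, k i = ν * LinearMap.trace F V (E 0 * Es i) := by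
    intro i
    rw [htrk i, hν]
    field_simp
  have part2 : ∀ i, k i ≠ 0 := by
    intro i hki
    apply hnz i
    rw [key i, hki, zero_smul]
  -- trace of E 0 is 1
  have hproj : LinearMap.IsProj (LinearMap.range (E 0)) (E 0) := by
    constructor
    · intro x; exact LinearMap.mem_range_self _ x
    · rintro x ⟨y, rfl⟩
      have := hE 0 0; simp only [if_pos rfl] at this
      exact congrFun (congrArg (fun f => f.toFun) this) y
  have htrE0 : LinearMap.trace F V (E 0) = 1 := by
    rw [hproj.trace, hErk 0, Nat.cast_one]
  -- ∑ Es i = 1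
  have hsum1 : ∑ i, Es i = 1 := by
    -- choose nonzero vectors in the ranges
    have hvex : ∀ i, ∃ w, Es i w ≠ 0 := by
      intro i
      by_contra h
      push_neg at h
      have h0 : Es i = 0 := LinearMap.ext fun w => h w
      have h1 := hEsrk i
      rw [h0, LinearMap.range_zero, finrank_bot F V] at h1
      omega
    choose w hw using hvex
    set v : Fin (d + 1) → V := fun i => Es i (w i) with hv
    have hEsv : ∀ i j, Es i (v j) = if i = j then v j else 0 := by
      intro i j
      have h2 := congrFun (congrArg (fun f => f.toFun) (hEs i j)) (w j)
      by_cases hij : i = j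
      · simpa [hv, hij, Module.End.mul_apply] using h2
      · simpa [hv, hij, Module.End.mul_apply] using h2
    have hli : LinearIndependent F v := by
      rw [Fintype.linearIndependent_iff]
      intro g hg j
      have := congrArg (Es j) hg
      rw [map_sum, map_zero] at this
      simp only [map_smul, hEsv] at this
      rw [Finset.sum_eq_single j] at this
      · simp only [if_pos rfl] at this
        rcases smul_eq_zero.mp this with h | h
        · exact h
        · exact absurd h (hw j)
      · intro i _ hij
        simp [Ne.symm hij]
      · intro h; exact absurd (Finset.mem_univ j) h
    have hspan : Submodule.span F (Set.range v) = ⊤ :=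
      hli.span_eq_top_of_card_eq_finrank (by simp [hdim])
    apply LinearMap.ext_on_range hspan
    intro i
    simp only [LinearMap.coe_sum, Finset.sum_apply, Module.End.one_apply]
    rw [Finset.sum_eq_single i]
    · exact (hEsv i i).trans (if_pos rfl)
    · intro j _ hji
      exact (hEsv j i).trans (if_neg hji)
    · intro h; exact absurd (Finset.mem_univ i) h
  have part3 : ∑ i, k i = ν := by
    have : ∑ i, k i = ν * ∑ i, LinearMap.trace F V (E 0 * Es i) := by
      rw [Finset.mul_sum]
      exact Finset.sum_congr rfl fun i _ => part1 i
    rw [this, ← map_sum, ← Finset.mul_sum, hsum1, mul_one, htrE0, mul_one]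
  have part4 : k 0 = 1 := by
    rw [part1 0, hν, inv_mul_cancel₀ htr]
  exact ⟨part1, part2, part3, part4⟩
end

section
/- Let Φ = ({E_i}_{i=0}^d; {E*_i}_{i=0}^d) be a symmetric idempotent system on V, and set ν = tr(E_0 E*_0)^{-1}. Then for 0 ≤ i,j ≤ d, A_i E*_0 A_j = ν E*_i E_0 E*_j. -/
open LinearMap Module

-- sandwich lemma: rank-1 idempotent P, P X P = tr(X P) • P
lemma rank_one_sandwich {F V : Type*} [Field F] [AddCommGroup V] [Module F V]
    [FiniteDimensional F V] (P X : Module.End F V) (hP : P * P = P)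
    (hrk : Module.finrank F (LinearMap.range P) = 1) :
    P * X * P = (LinearMap.trace F V (X * P)) • P := by
  -- get generator of range P
  have hproj : LinearMap.IsProj (LinearMap.range P) P := by
    refine ⟨fun x => LinearMap.mem_range_self P x, ?_⟩
    rintro x ⟨y, rfl⟩
    have := congrArg (fun f => f y) hP
    simpa [Module.End.mul_apply] using this
  have htrP : LinearMap.trace F V P = 1 := by
    rw [hproj.trace, hrk, Nat.cast_one]
  obtain ⟨v, hv, hvne⟩ : ∃ v ∈ LinearMap.range P, v ≠ 0 := by
    by_contra h
    push_neg at h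
    have : LinearMap.range P = ⊥ := by
      rw [Submodule.eq_bot_iff]; exact h
    rw [this] at hrk; simp at hrk
  have hspan : LinearMap.range P = Submodule.span F {v} := by
    apply (Submodule.eq_of_le_of_finrank_le (Submodule.span_le.mpr (by simpa using hv)) ?_).symm
    rw [hrk, finrank_span_singleton hvne]
  -- everything in range P is a multiple of v
  have hmul : ∀ u : V, ∃ a : F, P u = a • v := by
    intro u
    have : P u ∈ Submodule.span F {v} := hspan ▸ LinearMap.mem_range_self P u
    rcases Submodule.mem_span_singleton.mp this with ⟨a, ha⟩
    exact ⟨a, ha.symm⟩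
  obtain ⟨c, hc⟩ : ∃ c : F, P (X v) = c • v := hmul (X v)
  have hPv : P v = v := hproj.map_id v hv
  have hPXP : P * X * P = c • P := by
    ext u
    obtain ⟨a, ha⟩ := hmul u
    simp only [Module.End.mul_apply, LinearMap.smul_apply]
    rw [ha, map_smul, map_smul, hc]
    module
  have : LinearMap.trace F V (P * X * P) = c := by
    rw [hPXP, map_smul, htrP, smul_eq_mul, mul_one]
  rw [hPXP]
  congr 1
  rw [← this, mul_assoc, LinearMap.trace_mul_comm F P (X * P), mul_assoc, hP]

theorem stmt_7 (d : ℕ) (F V : Type*) [Field F] [AddCommGroup V] [Module F V]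
    [FiniteDimensional F V] (hdim : Module.finrank F V = d + 1)
    (E Es : Fin (d + 1) → Module.End F V)
    (hE : ∀ i j, E i * E j = if i = j then E i else 0)
    (hErk : ∀ i, Module.finrank F (LinearMap.range (E i)) = 1)
    (hEs : ∀ i j, Es i * Es j = if i = j then Es i else 0)
    (hEsrk : ∀ i, Module.finrank F (LinearMap.range (Es i)) = 1)
    (hnz : ∀ i, E 0 * Es i * E 0 ≠ 0)
    (hnzs : ∀ i, Es 0 * E i * Es 0 ≠ 0)
    (dag : Module.End F V ≃ₗ[F] Module.End F V)
    (hdagmul : ∀ Y Z, dag (Y * Z) = dag Z * dag Y)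
    (hdagE : ∀ i, dag (E i) = E i)
    (hdagEs : ∀ i, dag (Es i) = Es i)
    (A : Fin (d + 1) → Module.End F V)
    (hAmem : ∀ i, A i ∈ Submodule.span F (Set.range E))
    (hAdef : ∀ i, A i * (Es 0 * E 0) = Es i * E 0)
    (ν : F) (htr : LinearMap.trace F V (E 0 * Es 0) ≠ 0)
    (hν : ν = (LinearMap.trace F V (E 0 * Es 0))⁻¹) :
    ∀ i j, A i * Es 0 * A j = ν • (Es i * E 0 * Es j) := by
  -- dag fixes A j
  have hdagA : ∀ j, dag (A j) = A j := by
    intro j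
    refine Submodule.span_induction ?_ ?_ ?_ ?_ (hAmem j)
    · rintro x ⟨k, rfl⟩; exact hdagE k
    · simp
    · intro x y _ _ hx hy; rw [map_add, hx, hy]
    · intro a x _ hx; rw [map_smul, hx]
  -- dual defining relation
  have h2 : ∀ j, E 0 * Es 0 * A j = E 0 * Es j := by
    intro j
    have h := congrArg dag (hAdef j)
    simp only [hdagmul, hdagE, hdagEs, hdagA] at h
    exact h
  -- sandwich
  have key : Es 0 * E 0 * Es 0 = (LinearMap.trace F V (E 0 * Es 0)) • Es 0 := by
    have := rank_one_sandwich (Es 0) (E 0) (by simpa using hEs 0 0) (hEsrk 0)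
    exact this
  intro i j
  have calc1 : A i * (Es 0 * E 0 * Es 0) * A j = Es i * E 0 * Es j := by
    calc A i * (Es 0 * E 0 * Es 0) * A j
        = (A i * (Es 0 * E 0)) * (Es 0 * A j) := by noncomm_ring
      _ = Es i * E 0 * Es 0 * A j := by rw [hAdef i]; noncomm_ring
      _ = Es i * (E 0 * Es 0 * A j) := by noncomm_ring
      _ = Es i * (E 0 * Es j) := by rw [h2 j]
      _ = Es i * E 0 * Es j := by noncomm_ring
  rw [key] at calc1
  have : (LinearMap.trace F V (E 0 * Es 0)) • (A i * Es 0 * A j) = Es i * E 0 * Es j := by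
    rw [← calc1]
    simp only [mul_smul_comm, smul_mul_assoc]
  rw [hν, ← this]
  rw [smul_smul, inv_mul_cancel₀ htr, one_smul]
end

section
/- Let Φ = ({E_i}_{i=0}^d; {E*_i}_{i=0}^d) be a symmetric idempotent system on V. Then for 0 ≤ i,j ≤ d, E_i E*_0 A_j = A*_i E_0 E*_j. -/
theorem stmt_8 (d : ℕ) (F V : Type*) [Field F] [AddCommGroup V] [Module F V]
    [FiniteDimensional F V] (hdim : Module.finrank F V = d + 1)
    (E Es : Fin (d + 1) → Module.End F V)
    (hE : ∀ i j, E i * E j = if i = j then E i else 0)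
    (hErk : ∀ i, Module.finrank F (LinearMap.range (E i)) = 1)
    (hEs : ∀ i j, Es i * Es j = if i = j then Es i else 0)
    (hEsrk : ∀ i, Module.finrank F (LinearMap.range (Es i)) = 1)
    (hnz : ∀ i, E 0 * Es i * E 0 ≠ 0)
    (hnzs : ∀ i, Es 0 * E i * Es 0 ≠ 0)
    (dag : Module.End F V ≃ₗ[F] Module.End F V)
    (hdagmul : ∀ Y Z, dag (Y * Z) = dag Z * dag Y)
    (hdagE : ∀ i, dag (E i) = E i)
    (hdagEs : ∀ i, dag (Es i) = Es i)
    (A : Fin (d + 1) → Module.End F V)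
    (hAmem : ∀ i, A i ∈ Submodule.span F (Set.range E))
    (hAdef : ∀ i, A i * (Es 0 * E 0) = Es i * E 0)
    (As : Fin (d + 1) → Module.End F V)
    (hAsmem : ∀ i, As i ∈ Submodule.span F (Set.range Es))
    (hAsdef : ∀ i, As i * (E 0 * Es 0) = E i * Es 0) :
    ∀ i j, E i * Es 0 * A j = As i * E 0 * Es j := by
  -- dag fixes everything in the span of the E's
  have hdagA : ∀ j, dag (A j) = A j := by
    have hspan : ∀ x ∈ Submodule.span F (Set.range E), dag x = x := by
      intro x hx
      induction hx using Submodule.span_induction with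
      | mem x hx => obtain ⟨k, rfl⟩ := hx; exact hdagE k
      | zero => simp
      | add x y _ _ hx hy => simp [map_add, hx, hy]
      | smul c x _ hx => simp [map_smul, hx]
    exact fun j => hspan _ (hAmem j)
  -- apply dag to hAdef
  have key : ∀ j, (E 0 * Es 0) * A j = E 0 * Es j := by
    intro j
    have h := congrArg dag (hAdef j)
    simp only [hdagmul, hdagE, hdagEs, hdagA] at h
    exact h
  intro i j
  calc E i * Es 0 * A j = As i * (E 0 * Es 0) * A j := by rw [hAsdef i]
    _ = As i * ((E 0 * Es 0) * A j) := by rw [mul_assoc]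
    _ = As i * (E 0 * Es j) := by rw [key j]
    _ = As i * E 0 * Es j := by rw [mul_assoc]
end

section
/- Let Φ = ({E_i}_{i=0}^d; {E*_i}_{i=0}^d) be a symmetric idempotent system on V, with intersection numbers p^h_{ij} and scalars k_i defined by A_i E_0 = k_i E_0. Then for 0 ≤ h,i,j ≤ d, k_h p^h_{ij} = k_i p^i_{jh} = k_j p^j_{hi}. -/
lemma rank_one_scalar {F V : Type*} [Field F] [AddCommGroup V] [Module F V]
    (e : Module.End F V) (he : e * e = e)
    (hr : Module.finrank F (LinearMap.range e) = 1) (X : Module.End F V) :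
    ∃ c : F, e * X * e = c • e := by
  rw [finrank_eq_one_iff'] at hr
  obtain ⟨v, hv0, hv⟩ := hr
  obtain ⟨c, hc⟩ := hv ⟨e (X v), LinearMap.mem_range_self e _⟩
  have hc' : e (X (v : V)) = c • (v : V) := (congrArg Subtype.val hc).symm
  refine ⟨c, ?_⟩
  ext w
  obtain ⟨a, ha⟩ := hv ⟨e w, LinearMap.mem_range_self e _⟩
  have ha' : e w = a • (v : V) := (congrArg Subtype.val ha).symm
  calc (e * X * e) w = e (X (e w)) := rfl
    _ = a • e (X (v : V)) := by rw [ha']; simp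
    _ = a • (c • (v : V)) := by rw [hc']
    _ = c • (a • (v : V)) := smul_comm a c _
    _ = c • e w := by rw [ha']
    _ = (c • e) w := rfl

theorem stmt_10 (d : ℕ) (F V : Type*) [Field F] [AddCommGroup V] [Module F V]
    [FiniteDimensional F V] (hdim : Module.finrank F V = d + 1)
    (E Es : Fin (d + 1) → Module.End F V)
    (hE : ∀ i j, E i * E j = if i = j then E i else 0)
    (hErk : ∀ i, Module.finrank F (LinearMap.range (E i)) = 1)
    (hEs : ∀ i j, Es i * Es j = if i = j then Es i else 0)
    (hEsrk : ∀ i, Module.finrank F (LinearMap.range (Es i)) = 1)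
    (hnz : ∀ i, E 0 * Es i * E 0 ≠ 0)
    (hnzs : ∀ i, Es 0 * E i * Es 0 ≠ 0)
    (dag : Module.End F V ≃ₗ[F] Module.End F V)
    (hdagmul : ∀ Y Z, dag (Y * Z) = dag Z * dag Y)
    (hdagE : ∀ i, dag (E i) = E i)
    (hdagEs : ∀ i, dag (Es i) = Es i)
    (A : Fin (d + 1) → Module.End F V)
    (hAmem : ∀ i, A i ∈ Submodule.span F (Set.range E))
    (hAdef : ∀ i, A i * (Es 0 * E 0) = Es i * E 0)
    (p : Fin (d + 1) → Fin (d + 1) → Fin (d + 1) → F)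
    (hp : ∀ i j, A i * A j = ∑ h, p h i j • A h)
    (k : Fin (d + 1) → F) (hk : ∀ i, A i * E 0 = k i • E 0) :
    ∀ h i j, k h * p h i j = k i * p i j h ∧ k i * p i j h = k j * p j h i := by
  -- scalars ε i with E 0 * Es i * E 0 = ε i • E 0
  have hscalar : ∀ X : Module.End F V, ∃ c : F, E 0 * X * E 0 = c • E 0 :=
    rank_one_scalar (E 0) (by simpa using hE 0 0) (hErk 0)
  choose τ hτ using hscalar
  have hE0ne : E 0 ≠ 0 := by
    intro h; exact hnz 0 (by rw [h]; simp)
  have hcanc : ∀ a b : F, a • E 0 = b • E 0 → a = b := by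
    intro a b hab
    by_contra hne
    have h1 : (a - b) • E 0 = 0 := by rw [sub_smul, hab, sub_self]
    rcases smul_eq_zero.mp h1 with h | h
    · exact hne (sub_eq_zero.mp h)
    · exact hE0ne h
  have hτ0 : τ (Es 0) ≠ 0 := by
    intro h
    apply hnz 0
    rw [hτ (Es 0), h, zero_smul]
  -- dag fixes members of span of the E i
  have hdagfix : ∀ x ∈ Submodule.span F (Set.range E), dag x = x := by
    intro x hx
    induction hx using Submodule.span_induction with
    | mem x h => obtain ⟨j, rfl⟩ := h; exact hdagE j
    | zero => simp
    | add x y _ _ hx hy => simp [hx, hy]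
    | smul c x _ hx => simp [hx]
  have hdagA : ∀ i, dag (A i) = A i := fun i => hdagfix (A i) (hAmem i)
  -- commutativity of span elements
  have hEcomm : ∀ i j, E i * E j = E j * E i := by
    intro i j
    rw [hE, hE]
    by_cases h : i = j
    · subst h; simp
    · rw [if_neg h, if_neg (Ne.symm h)]
  have hcomm1 : ∀ x ∈ Submodule.span F (Set.range E), ∀ j, x * E j = E j * x := by
    intro x hx
    induction hx using Submodule.span_induction with
    | mem y h => obtain ⟨i, rfl⟩ := h; exact fun j => hEcomm i j
    | zero => simp
    | add y z _ _ hy hz => intro j; rw [add_mul, mul_add, hy, hz]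
    | smul c y _ hy => intro j; rw [smul_mul_assoc, mul_smul_comm, hy]
  have hcomm : ∀ x ∈ Submodule.span F (Set.range E), ∀ y ∈ Submodule.span F (Set.range E),
      x * y = y * x := by
    intro x hx y hy
    induction hy using Submodule.span_induction with
    | mem z h => obtain ⟨j, rfl⟩ := h; exact hcomm1 x hx j
    | zero => simp
    | add y z _ _ hy hz => rw [mul_add, add_mul, hy, hz]
    | smul c y _ hy => rw [mul_smul_comm, smul_mul_assoc, hy]
  have hAcomm : ∀ i j, A i * A j = A j * A i := fun i j =>
    hcomm (A i) (hAmem i) (A j) (hAmem j)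
  -- E 0 * Es i = E 0 * Es 0 * A i
  have hleft : ∀ i, E 0 * Es 0 * A i = E 0 * Es i := by
    intro i
    have h1 := congrArg dag (hAdef i)
    rw [hdagmul, hdagmul, hdagmul, hdagE, hdagEs, hdagEs, hdagA] at h1
    exact h1
  -- key product formula
  have key : ∀ l m, E 0 * Es 0 * (A l * A m) * (Es 0 * E 0)
      = (if l = m then τ (Es m) else 0) • E 0 := by
    intro l m
    have h1 : E 0 * Es 0 * (A l * A m) * (Es 0 * E 0)
        = (E 0 * Es 0 * A l) * (A m * (Es 0 * E 0)) := by
      noncomm_ring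
    rw [h1, hleft, hAdef]
    have h2 : E 0 * Es l * (Es m * E 0) = E 0 * (Es l * Es m) * E 0 := by noncomm_ring
    rw [h2, hEs]
    by_cases h : l = m
    · subst h; rw [if_pos rfl, if_pos rfl, hτ]
    · rw [if_neg h, if_neg h, zero_smul, mul_zero, zero_mul]
  -- the triple product scalar
  have hS : ∀ h i j, E 0 * Es 0 * (A h * (A i * A j)) * (Es 0 * E 0)
      = (p h i j * τ (Es h)) • E 0 := by
    intro h i j
    rw [hp i j]
    have expand : E 0 * Es 0 * (A h * (∑ l, p l i j • A l)) * (Es 0 * E 0)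
        = ∑ l, p l i j • (E 0 * Es 0 * (A h * A l) * (Es 0 * E 0)) := by
      rw [Finset.mul_sum, Finset.mul_sum, Finset.sum_mul]
      apply Finset.sum_congr rfl
      intro l _
      rw [mul_smul_comm, mul_smul_comm, smul_mul_assoc]
    rw [expand]
    have step : ∀ l ∈ (Finset.univ : Finset (Fin (d+1))),
        p l i j • (E 0 * Es 0 * (A h * A l) * (Es 0 * E 0))
        = if h = l then (p l i j * τ (Es l)) • E 0 else 0 := by
      intro l _
      rw [key h l]
      by_cases hc : h = l
      · rw [if_pos hc, if_pos hc, smul_smul]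
      · rw [if_neg hc, if_neg hc, zero_smul, smul_zero]
    rw [Finset.sum_congr rfl step, Finset.sum_ite_eq]
    simp
  -- cyclic symmetry of triple products
  have hcyc : ∀ h i j, A h * (A i * A j) = A i * (A j * A h) := by
    intro h i j
    rw [← mul_assoc, hAcomm h i, mul_assoc, hAcomm h j, ← mul_assoc, mul_assoc]
  -- ε i = k i * ε 0
  have hτk : ∀ i, τ (Es i) = k i * τ (Es 0) := by
    intro i
    apply hcanc
    rw [← hτ (Es i), ← hleft i, mul_assoc, hk i, mul_smul_comm, hτ (Es 0), smul_smul]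
  -- main scalar identities
  have main : ∀ h i j, p h i j * τ (Es h) = p i j h * τ (Es i) := by
    intro h i j
    apply hcanc
    rw [← hS h i j, ← hS i j h, hcyc]
  intro h i j
  have e1 := main h i j
  have e2 := main i j h
  rw [hτk h, hτk i] at e1
  rw [hτk i, hτk j] at e2
  constructor
  · have := mul_right_cancel₀ hτ0 (by linear_combination e1 : p h i j * k h * τ (Es 0) = p i j h * k i * τ (Es 0))
    linear_combination this
  · have := mul_right_cancel₀ hτ0 (by linear_combination e2 : p i j h * k i * τ (Es 0) = p j h i * k j * τ (Es 0))
    linear_combination this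
end

section
/- Let Φ = ({E_i}_{i=0}^d; {E*_i}_{i=0}^d) be a symmetric idempotent system on V, with intersection numbers p^h_{ij}. Then for 0 ≤ h,i,j ≤ d, E*_i A_j E*_h = 0 if and only if p^h_{ij} = 0. -/
theorem stmt_11 (d : ℕ) (F V : Type*) [Field F] [AddCommGroup V] [Module F V]
    [FiniteDimensional F V] (hdim : Module.finrank F V = d + 1)
    (E Es : Fin (d + 1) → Module.End F V)
    (hE : ∀ i j, E i * E j = if i = j then E i else 0)
    (hErk : ∀ i, Module.finrank F (LinearMap.range (E i)) = 1)
    (hEs : ∀ i j, Es i * Es j = if i = j then Es i else 0)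
    (hEsrk : ∀ i, Module.finrank F (LinearMap.range (Es i)) = 1)
    (hnz : ∀ i, E 0 * Es i * E 0 ≠ 0)
    (hnzs : ∀ i, Es 0 * E i * Es 0 ≠ 0)
    (dag : Module.End F V ≃ₗ[F] Module.End F V)
    (hdagmul : ∀ Y Z, dag (Y * Z) = dag Z * dag Y)
    (hdagE : ∀ i, dag (E i) = E i)
    (hdagEs : ∀ i, dag (Es i) = Es i)
    (A : Fin (d + 1) → Module.End F V)
    (hAmem : ∀ i, A i ∈ Submodule.span F (Set.range E))
    (hAdef : ∀ i, A i * (Es 0 * E 0) = Es i * E 0)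
    (p : Fin (d + 1) → Fin (d + 1) → Fin (d + 1) → F)
    (hp : ∀ i j, A i * A j = ∑ h, p h i j • A h) :
    ∀ h i j, Es i * A j * Es h = 0 ↔ p h i j = 0 := by
  -- dag fixes each A j
  have hdagA : ∀ j, dag (A j) = A j := by
    intro j
    refine Submodule.span_induction ?_ ?_ ?_ ?_ (hAmem j)
    · rintro x ⟨i, rfl⟩; exact hdagE i
    · simp
    · intro x y _ _ hx hy; rw [map_add, hx, hy]
    · intro c x _ hx; rw [map_smul, hx]
  -- E0 * Es0 * A j = E0 * Es j
  have key2 : ∀ j, E 0 * Es 0 * A j = E 0 * Es j := by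
    intro j
    have h1 := congrArg dag (hAdef j)
    rw [hdagmul, hdagmul, hdagmul, hdagE, hdagEs, hdagEs, hdagA] at h1
    exact h1
  -- the key identity
  have star : ∀ h i j, E 0 * (Es i * A j * Es h) = p h i j • (E 0 * Es h) := by
    intro h i j
    have h1 : E 0 * (Es i * A j * Es h) = E 0 * Es 0 * (A i * A j) * Es h := by
      simp only [← mul_assoc]
      rw [key2 i]
    rw [h1, hp i j, Finset.mul_sum, Finset.sum_mul]
    have h2 : ∀ k, E 0 * Es 0 * (p k i j • A k) * Es k = p k i j • (E 0 * Es k) := by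
      intro k
      rw [mul_smul_comm, smul_mul_assoc, key2, mul_assoc, hEs]
      simp
    rw [Finset.sum_eq_single h]
    · rw [h2]
    · intro k _ hk
      rw [mul_smul_comm, smul_mul_assoc, key2, mul_assoc, hEs]
      simp [hk]
    · intro hh; exact absurd (Finset.mem_univ h) hh
  have hE0Es : ∀ h : Fin (d + 1), E 0 * Es h ≠ 0 := by
    intro h hc
    exact hnz h (by rw [hc, zero_mul])
  intro h i j
  constructor
  · intro hX
    have h1 := star h i j
    rw [hX, mul_zero] at h1
    rcases smul_eq_zero.mp h1.symm with h2 | h2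
    · exact h2
    · exact absurd h2 (hE0Es h)
  · intro hp0
    have hz : E 0 * (Es i * A j * Es h) = 0 := by rw [star, hp0, zero_smul]
    by_contra hX
    set X := Es i * A j * Es h with hXdef
    have hXi : Es i * X = X := by
      rw [hXdef, ← mul_assoc, ← mul_assoc, hEs]
      simp
    have hrange : LinearMap.range X ≤ LinearMap.range (Es i) := by
      rw [← hXi]
      exact LinearMap.range_comp_le_range X (Es i)
    have hXne : LinearMap.range X ≠ ⊥ := by
      simpa [LinearMap.range_eq_bot] using hX
    have hpos : 0 < Module.finrank F (LinearMap.range X) :=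
      Module.finrank_pos_iff.mpr (Submodule.nontrivial_iff_ne_bot.mpr hXne)
    have heq : LinearMap.range X = LinearMap.range (Es i) := by
      apply Submodule.eq_of_le_of_finrank_le hrange
      rw [hEsrk i]
      omega
    have hE0Esi : E 0 * Es i = 0 := by
      ext v
      have hmem : Es i v ∈ LinearMap.range X := by
        rw [heq]; exact LinearMap.mem_range_self (Es i) v
      obtain ⟨w, hw⟩ := hmem
      have := LinearMap.ext_iff.mp hz w
      simp only [Module.End.mul_apply, LinearMap.zero_apply] at this ⊢
      rw [← hw]
      exact this
    exact hnz i (by rw [hE0Esi, zero_mul])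
end

section
/- Let Φ = ({E_i}_{i=0}^d; {E*_i}_{i=0}^d) be a symmetric idempotent system on V, with ν = tr(E_0 E*_0)^{-1} and eigenvalue arrays p_i(j), q_i(j). Then for 0 ≤ i,j ≤ d, ∑_{h=0}^d p_i(h) q_h(j) = δ_{ij} ν. -/
theorem stmt_12 (d : ℕ) (F V : Type*) [Field F] [AddCommGroup V] [Module F V]
    [FiniteDimensional F V] (hdim : Module.finrank F V = d + 1)
    (E Es : Fin (d + 1) → Module.End F V)
    (hE : ∀ i j, E i * E j = if i = j then E i else 0)
    (hErk : ∀ i, Module.finrank F (LinearMap.range (E i)) = 1)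
    (hEs : ∀ i j, Es i * Es j = if i = j then Es i else 0)
    (hEsrk : ∀ i, Module.finrank F (LinearMap.range (Es i)) = 1)
    (hnz : ∀ i, E 0 * Es i * E 0 ≠ 0)
    (hnzs : ∀ i, Es 0 * E i * Es 0 ≠ 0)
    (dag : Module.End F V ≃ₗ[F] Module.End F V)
    (hdagmul : ∀ Y Z, dag (Y * Z) = dag Z * dag Y)
    (hdagE : ∀ i, dag (E i) = E i)
    (hdagEs : ∀ i, dag (Es i) = Es i)
    (A : Fin (d + 1) → Module.End F V)
    (hAmem : ∀ i, A i ∈ Submodule.span F (Set.range E))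
    (hAdef : ∀ i, A i * (Es 0 * E 0) = Es i * E 0)
    (As : Fin (d + 1) → Module.End F V)
    (hAsmem : ∀ i, As i ∈ Submodule.span F (Set.range Es))
    (hAsdef : ∀ i, As i * (E 0 * Es 0) = E i * Es 0)
    (ν : F) (htr : LinearMap.trace F V (E 0 * Es 0) ≠ 0)
    (hν : ν = (LinearMap.trace F V (E 0 * Es 0))⁻¹)
    (pe : Fin (d + 1) → Fin (d + 1) → F)
    (hpe : ∀ i j, A i * E j = pe i j • E j)
    (qe : Fin (d + 1) → Fin (d + 1) → F)
    (hqe : ∀ i j, As i * Es j = qe i j • Es j) :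
    ∀ i j, ∑ h, pe i h * qe h j = if i = j then ν else 0 := by
  set t : F := LinearMap.trace F V (E 0 * Es 0) with ht
  have hspan : ∀ (G : Fin (d+1) → Module.End F V),
      (∀ i j, G i * G j = if i = j then G i else 0) →
      ∀ X ∈ Submodule.span F (Set.range G), X = ∑ h, X * G h := by
    intro G hG X hX
    induction hX using Submodule.span_induction with
    | mem x hx =>
      obtain ⟨k, rfl⟩ := hx
      simp [hG]
    | zero => simp
    | add x y _ _ hx hy =>
      calc x + y = (∑ h, x * G h) + ∑ h, y * G h := by rw [← hx, ← hy]
      _ = ∑ h, (x + y) * G h := by rw [← Finset.sum_add_distrib]; simp [add_mul]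
    | smul c x _ hx =>
      calc c • x = c • ∑ h, x * G h := by rw [← hx]
      _ = ∑ h, (c • x) * G h := by rw [Finset.smul_sum]; simp [smul_mul_assoc]
  have hA : ∀ i, A i = ∑ h, pe i h • E h := by
    intro i
    rw [hspan E hE (A i) (hAmem i)]
    exact Finset.sum_congr rfl fun h _ => hpe i h
  have hAs : ∀ i, As i = ∑ k, qe i k • Es k := by
    intro i
    rw [hspan Es hEs (As i) (hAsmem i)]
    exact Finset.sum_congr rfl fun k _ => hqe i k
  -- idempotence facts
  have hEidem : ∀ i, E i * E i = E i := fun i => by simpa using hE i i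
  -- rank one trick: E 0 * Es 0 * E 0 = t • E 0
  have hkey : E 0 * Es 0 * E 0 = t • E 0 := by
    -- range E 0 is spanned by some v with E 0 v = v
    obtain ⟨v, hv⟩ : ∃ v : V, LinearMap.range (E 0) = Submodule.span F {v} := by
      obtain ⟨⟨v, hvmem⟩, hv⟩ := finrank_eq_one_iff'.mp (by
        simpa using hErk 0)
      refine ⟨v, le_antisymm ?_ ?_⟩
      · intro x hx
        obtain ⟨c, hc⟩ := hv.2 ⟨x, hx⟩
        have : c • v = x := congrArg Subtype.val hc
        rw [← this]
        exact Submodule.smul_mem _ _ (Submodule.mem_span_singleton_self v)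
      · rw [Submodule.span_singleton_le_iff_mem]; exact hvmem
    have hvne : v ≠ 0 := by
      intro h0
      have := hErk 0
      rw [hv, h0, Submodule.span_zero_singleton] at this
      simp at this
    have hEv : E 0 v = v := by
      have hvmem : v ∈ LinearMap.range (E 0) := hv ▸ Submodule.mem_span_singleton_self v
      obtain ⟨u, hu⟩ := hvmem
      rw [← hu, ← Module.End.mul_apply, hEidem 0]
    -- E 0 (Es 0 v) = c • v
    obtain ⟨c, hc⟩ : ∃ c : F, E 0 (Es 0 v) = c • v := by
      have : E 0 (Es 0 v) ∈ LinearMap.range (E 0) := LinearMap.mem_range_self _ _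
      rw [hv, Submodule.mem_span_singleton] at this
      obtain ⟨c, hc⟩ := this
      exact ⟨c, hc.symm⟩
    have hptwise : E 0 * Es 0 * E 0 = c • E 0 := by
      ext x
      have hx : E 0 x ∈ LinearMap.range (E 0) := LinearMap.mem_range_self _ _
      rw [hv, Submodule.mem_span_singleton] at hx
      obtain ⟨g, hg⟩ := hx
      have : (E 0 * Es 0 * E 0) x = E 0 (Es 0 (E 0 x)) := rfl
      rw [this, ← hg, map_smul, map_smul, hc, smul_smul, mul_comm, ← smul_smul]
      simp [hg]
    -- compute c = t via trace
    have htrE : LinearMap.trace F V (E 0) = 1 := by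
      have hproj : LinearMap.IsProj (LinearMap.range (E 0)) (E 0) := by
        constructor
        · intro x; exact LinearMap.mem_range_self _ _
        · intro x hx
          obtain ⟨u, hu⟩ := hx
          rw [← hu, ← Module.End.mul_apply, hEidem 0]
      rw [hproj.trace, hErk 0]
      simp
    have : t = c := by
      have h1 : LinearMap.trace F V (E 0 * Es 0 * E 0) = t := by
        rw [LinearMap.trace_mul_comm]
        rw [show E 0 * (E 0 * Es 0) = (E 0 * E 0) * Es 0 from (mul_assoc _ _ _).symm,
          hEidem 0]
      rw [hptwise] at h1
      rw [map_smul, htrE] at h1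
      simpa using h1.symm
    rw [hptwise, this]
  intro i j
  set S : F := ∑ h, pe i h * qe h j with hS
  -- B = ∑ h, pe i h • As h
  set B : Module.End F V := ∑ h, pe i h • As h with hB
  have step3 : B * (E 0 * Es 0) = A i * Es 0 := by
    rw [hB, Finset.sum_mul]
    have : ∀ h : Fin (d+1), (pe i h • As h) * (E 0 * Es 0) = (pe i h • E h) * Es 0 := by
      intro h
      rw [smul_mul_assoc, hAsdef h, smul_mul_assoc]
    rw [Finset.sum_congr rfl fun h _ => this h, ← Finset.sum_mul, ← hA i]
  have step4 : t • (B * E 0) = Es i * E 0 := by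
    have h1 : B * (E 0 * Es 0) * E 0 = A i * (Es 0 * E 0) := by
      rw [step3, mul_assoc]
    rw [hAdef i] at h1
    have h2 : B * (E 0 * Es 0) * E 0 = B * (E 0 * Es 0 * E 0) := by
      rw [mul_assoc]
    rw [h2, hkey, mul_smul_comm] at h1
    exact h1
  have step6 : Es j * B = S • Es j := by
    rw [hB, Finset.mul_sum, hS, Finset.sum_smul]
    refine Finset.sum_congr rfl fun h _ => ?_
    rw [mul_smul_comm, hAs h, Finset.mul_sum]
    have : ∀ k : Fin (d+1), Es j * (qe h k • Es k) = if j = k then qe h j • Es j else 0 := by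
      intro k
      rw [mul_smul_comm, hEs j k]
      split
      · subst ‹j = k›; rfl
      · simp
    rw [Finset.sum_congr rfl fun k _ => this k, Finset.sum_ite_eq]
    simp [smul_smul, mul_comm]
  -- combine
  have main : (t * S) • (Es j * E 0) = (if i = j then (1:F) else 0) • (Es i * E 0) := by
    have h1 : Es j * (t • (B * E 0)) = Es j * (Es i * E 0) := by rw [step4]
    rw [mul_smul_comm] at h1
    have h2 : Es j * (B * E 0) = S • (Es j * E 0) := by
      rw [← mul_assoc, step6, smul_mul_assoc]
    rw [h2, smul_smul] at h1
    have h3 : Es j * (Es i * E 0) = (if i = j then (1:F) else 0) • (Es i * E 0) := by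
      rw [← mul_assoc, hEs j i]
      split
      · subst ‹j = i›; simp
      · rename_i hji
        split
        · rename_i hij; exact absurd hij.symm hji
        · simp
    rw [h3] at h1
    exact h1
  have hjne : Es j * E 0 ≠ 0 := by
    intro h0
    apply hnz j
    rw [mul_assoc, h0, mul_zero]
  have hine : Es i * E 0 ≠ 0 := by
    intro h0
    apply hnz i
    rw [mul_assoc, h0, mul_zero]
  by_cases hij : i = j
  · subst hij
    have main' : (t * S) • (Es i * E 0) = Es i * E 0 := by simpa using main
    have hz : (t * S - 1) • (Es i * E 0) = 0 := by
      rw [sub_smul, main', one_smul, sub_self]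
    rw [if_pos rfl]
    rcases smul_eq_zero.mp hz with h | h
    · have hts : t * S = 1 := sub_eq_zero.mp h
      rw [hν]
      exact eq_inv_of_mul_eq_one_left (by rw [mul_comm]; exact hts)
    · exact absurd h hine
  · simp only [if_neg hij, zero_smul] at main
    simp only [if_neg hij]
    rcases smul_eq_zero.mp main with h | h
    · rcases mul_eq_zero.mp h with h' | h'
      · exact absurd h' htr
      · exact h'
    · exact absurd h hjne
end

section
/- Let Φ = ({E_i}_{i=0}^d; {E*_i}_{i=0}^d) be a symmetric idempotent system on V, with eigenvalue arrays p_i(j), q_i(j) and scalars k_i, k*_i. Then for 0 ≤ i,j ≤ d, p_i(j) k*_j = q_j(i) k_i. -/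
theorem sandwich (F V : Type*) [Field F] [AddCommGroup V] [Module F V]
    (P X : Module.End F V) (hP : P * P = P)
    (hrk : Module.finrank F (LinearMap.range P) = 1) :
    ∃ c : F, P * X * P = c • P := by
  obtain ⟨v₀, hv0, hall⟩ := finrank_eq_one_iff'.mp hrk
  have hPv : P (v₀ : V) = (v₀ : V) := by
    obtain ⟨u, hu⟩ := v₀.2
    rw [← hu, ← Module.End.mul_apply, hP]
  have hPXv : P (X (v₀ : V)) ∈ LinearMap.range P := ⟨X (v₀ : V), rfl⟩
  obtain ⟨c, hc⟩ := hall ⟨P (X (v₀ : V)), hPXv⟩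
  have hc' : c • (v₀ : V) = P (X (v₀ : V)) := congrArg Subtype.val hc
  refine ⟨c, ?_⟩
  ext w
  obtain ⟨a, ha⟩ := hall ⟨P w, ⟨w, rfl⟩⟩
  have ha' : a • (v₀ : V) = P w := congrArg Subtype.val ha
  have h1 : (P * X * P) w = P (X (P w)) := rfl
  rw [LinearMap.smul_apply, h1, ← ha', map_smul, map_smul, ← hc',
    smul_smul, smul_smul, mul_comm]

theorem stmt_13 (d : ℕ) (F V : Type*) [Field F] [AddCommGroup V] [Module F V]
    [FiniteDimensional F V] (hdim : Module.finrank F V = d + 1)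
    (E Es : Fin (d + 1) → Module.End F V)
    (hE : ∀ i j, E i * E j = if i = j then E i else 0)
    (hErk : ∀ i, Module.finrank F (LinearMap.range (E i)) = 1)
    (hEs : ∀ i j, Es i * Es j = if i = j then Es i else 0)
    (hEsrk : ∀ i, Module.finrank F (LinearMap.range (Es i)) = 1)
    (hnz : ∀ i, E 0 * Es i * E 0 ≠ 0)
    (hnzs : ∀ i, Es 0 * E i * Es 0 ≠ 0)
    (dag : Module.End F V ≃ₗ[F] Module.End F V)
    (hdagmul : ∀ Y Z, dag (Y * Z) = dag Z * dag Y)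
    (hdagE : ∀ i, dag (E i) = E i)
    (hdagEs : ∀ i, dag (Es i) = Es i)
    (A : Fin (d + 1) → Module.End F V)
    (hAmem : ∀ i, A i ∈ Submodule.span F (Set.range E))
    (hAdef : ∀ i, A i * (Es 0 * E 0) = Es i * E 0)
    (As : Fin (d + 1) → Module.End F V)
    (hAsmem : ∀ i, As i ∈ Submodule.span F (Set.range Es))
    (hAsdef : ∀ i, As i * (E 0 * Es 0) = E i * Es 0)
    (pe : Fin (d + 1) → Fin (d + 1) → F)
    (hpe : ∀ i j, A i * E j = pe i j • E j)
    (qe : Fin (d + 1) → Fin (d + 1) → F)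
    (hqe : ∀ i j, As i * Es j = qe i j • Es j)
    (k : Fin (d + 1) → F) (hk : ∀ i, A i * E 0 = k i • E 0)
    (ks : Fin (d + 1) → F) (hks : ∀ i, As i * Es 0 = ks i • Es 0) :
    ∀ i j, pe i j * ks j = qe j i * k i := by
  -- dag fixes A and As
  have hdagfix : ∀ (G : Fin (d+1) → Module.End F V), (∀ m, dag (G m) = G m) →
      ∀ x ∈ Submodule.span F (Set.range G), dag x = x := by
    intro G hG x hx
    induction hx using Submodule.span_induction with
    | mem x hx => obtain ⟨m, rfl⟩ := hx; exact hG m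
    | zero => exact map_zero _
    | add x y _ _ hx hy => rw [map_add, hx, hy]
    | smul c x _ hx => rw [map_smul, hx]
  have hdagA : ∀ m, dag (A m) = A m := fun m => hdagfix E hdagE (A m) (hAmem m)
  have hdagAs : ∀ m, dag (As m) = As m := fun m => hdagfix Es hdagEs (As m) (hAsmem m)
  -- transposed eigen relations
  have h_EA : ∀ m n, E n * A m = pe m n • E n := by
    intro m n
    have := congrArg dag (hpe m n)
    rwa [hdagmul, hdagE, hdagA, map_smul, hdagE] at this
  have h_EsAs : ∀ m n, Es n * As m = qe m n • Es n := by
    intro m n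
    have := congrArg dag (hqe m n)
    rwa [hdagmul, hdagEs, hdagAs, map_smul, hdagEs] at this
  have hE00 : E 0 * E 0 = E 0 := by simpa using hE 0 0
  have hEs00 : Es 0 * Es 0 = Es 0 := by simpa using hEs 0 0
  -- the nonzero element C
  obtain ⟨c, hc⟩ := sandwich F V (E 0) (Es 0) hE00 (hErk 0)
  have hc0 : c ≠ 0 := by
    intro h; apply hnz 0; rw [hc, h, zero_smul]
  have hEEs : E 0 * Es 0 ≠ 0 := by
    intro h; apply hnz 0; rw [h, zero_mul]
  have hCnz : E 0 * (Es 0 * (E 0 * Es 0)) ≠ 0 := by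
    have : E 0 * (Es 0 * (E 0 * Es 0)) = c • (E 0 * Es 0) := by
      rw [← mul_assoc, ← mul_assoc, hc, smul_mul_assoc]
    rw [this]
    exact smul_ne_zero hc0 hEEs
  intro i j
  -- e1 : Es 0 * (E j * (Es i * E 0)) = pe i j • (Es 0 * (E j * (Es 0 * E 0)))
  have e1 : Es 0 * (E j * (Es i * E 0)) = pe i j • (Es 0 * (E j * (Es 0 * E 0))) := by
    rw [← hAdef i, ← mul_assoc (E j), h_EA i j, smul_mul_assoc, mul_smul_comm]
  -- e2 : E 0 * (Es i * (E j * Es 0)) = qe j i • (E 0 * (Es i * (E 0 * Es 0)))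
  have e2 : E 0 * (Es i * (E j * Es 0)) = qe j i • (E 0 * (Es i * (E 0 * Es 0))) := by
    rw [← hAsdef j, ← mul_assoc (Es i), h_EsAs j i, smul_mul_assoc, mul_smul_comm]
  -- apply dag to e1
  have e1d : E 0 * (Es i * (E j * Es 0)) = pe i j • (E 0 * (Es 0 * (E j * Es 0))) := by
    have := congrArg dag e1
    simp only [hdagmul, map_smul, hdagE, hdagEs] at this
    calc E 0 * (Es i * (E j * Es 0)) = E 0 * Es i * E j * Es 0 := by
          rw [mul_assoc, mul_assoc]
      _ = pe i j • (E 0 * Es 0 * E j * Es 0) := this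
      _ = pe i j • (E 0 * (Es 0 * (E j * Es 0))) := by rw [mul_assoc, mul_assoc]
  -- reduce further
  have r1 : E 0 * (Es 0 * (E j * Es 0)) = ks j • (E 0 * (Es 0 * (E 0 * Es 0))) := by
    have hEs0Asj : Es 0 * As j = ks j • Es 0 := by
      have := congrArg dag (hks j)
      rwa [hdagmul, hdagEs, hdagAs, map_smul, hdagEs] at this
    rw [← hAsdef j, ← mul_assoc (Es 0), hEs0Asj, smul_mul_assoc, mul_smul_comm]
  have r2 : E 0 * (Es i * (E 0 * Es 0)) = k i • (E 0 * (Es 0 * (E 0 * Es 0))) := by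
    have hEsiE0 : Es i * E 0 = A i * (Es 0 * E 0) := (hAdef i).symm
    have h_E0A : E 0 * A i = k i • E 0 := by
      have := congrArg dag (hk i)
      rwa [hdagmul, hdagE, hdagA, map_smul, hdagE] at this
    calc E 0 * (Es i * (E 0 * Es 0))
        = E 0 * ((Es i * E 0) * Es 0) := by rw [mul_assoc]
      _ = E 0 * ((A i * (Es 0 * E 0)) * Es 0) := by rw [hEsiE0]
      _ = (E 0 * A i) * ((Es 0 * E 0) * Es 0) := by
          rw [mul_assoc (A i), ← mul_assoc (E 0)]
      _ = k i • (E 0 * ((Es 0 * E 0) * Es 0)) := by rw [h_E0A, smul_mul_assoc]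
      _ = k i • (E 0 * (Es 0 * (E 0 * Es 0))) := by rw [mul_assoc]
  -- combine
  have key : (pe i j * ks j) • (E 0 * (Es 0 * (E 0 * Es 0)))
      = (qe j i * k i) • (E 0 * (Es 0 * (E 0 * Es 0))) := by
    have := e1d.symm.trans e2
    rw [r1, r2, smul_smul, smul_smul] at this
    exact this
  have := sub_eq_zero.mpr key
  rw [← sub_smul] at this
  rcases smul_eq_zero.mp this with h | h
  · exact sub_eq_zero.mp h
  · exact absurd h hCnz
end

section
/- Let Φ = ({E_i}_{i=0}^d; {E*_i}_{i=0}^d) be a symmetric idempotent system on V, with ν = tr(E_0 E*_0)^{-1}, intersection numbers p^h_{ij}, and eigenvalue arrays p_i(j), q_i(j). Then for 0 ≤ h,i,j ≤ d, p^h_{ij} = ν^{-1} ∑_{r=0}^d p_i(r) p_j(r) q_r(h). -/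
open LinearMap Module Finset

lemma rk1_contract {F V : Type*} [Field F] [AddCommGroup V] [Module F V]
    [FiniteDimensional F V] (P X : Module.End F V) (hP : P * P = P)
    (h1 : Module.finrank F (LinearMap.range P) = 1) :
    P * X * P = (LinearMap.trace F V (P * X)) • P := by
  have hid : ∀ x ∈ LinearMap.range P, P x = x := by
    rintro x ⟨u, rfl⟩
    have := congrFun (congrArg DFunLike.coe hP) u
    simpa [Module.End.mul_apply] using this
  have hProj : LinearMap.IsProj (LinearMap.range P) P :=
    ⟨fun x => ⟨x, rfl⟩, hid⟩
  have htrP : LinearMap.trace F V P = 1 := by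
    rw [hProj.trace, h1]; norm_num
  obtain ⟨v, hv0, hv⟩ := (finrank_eq_one_iff' (K := F) (V := LinearMap.range P)).mp h1
  obtain ⟨c, hc⟩ := hv ⟨P (X (v : V)), ⟨_, rfl⟩⟩
  have hc' : c • (v : V) = P (X (v : V)) := congrArg Subtype.val hc
  have key : P * X * P = c • P := by
    ext w
    obtain ⟨t, ht⟩ := hv ⟨P w, ⟨w, rfl⟩⟩
    have ht' : t • (v : V) = P w := congrArg Subtype.val ht
    have hmain : P (X (P w)) = c • P w := by
      rw [← ht', map_smul, map_smul, ← hc', smul_smul, smul_smul, mul_comm]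
    simpa [Module.End.mul_apply] using hmain
  have htr : LinearMap.trace F V (P * X * P) = LinearMap.trace F V (P * X) := by
    rw [LinearMap.trace_mul_comm, ← mul_assoc, hP]
  rw [key, map_smul, htrP, smul_eq_mul, mul_one] at htr
  rw [key, htr]

lemma sum_smul_mul_single {F V : Type*} [Field F] [AddCommGroup V] [Module F V]
    {n : ℕ} (E : Fin n → Module.End F V)
    (hE : ∀ i j, E i * E j = if i = j then E i else 0)
    (a : Fin n → F) (r : Fin n) :
    (∑ s, a s • E s) * E r = a r • E r := by
  rw [Finset.sum_mul, Finset.sum_eq_single r]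
  · rw [smul_mul_assoc, hE, if_pos rfl]
  · intro s _ hsr
    rw [smul_mul_assoc, hE, if_neg hsr, smul_zero]
  · intro hr; exact absurd (Finset.mem_univ r) hr

lemma single_mul_sum_smul {F V : Type*} [Field F] [AddCommGroup V] [Module F V]
    {n : ℕ} (E : Fin n → Module.End F V)
    (hE : ∀ i j, E i * E j = if i = j then E i else 0)
    (a : Fin n → F) (r : Fin n) :
    E r * (∑ s, a s • E s) = a r • E r := by
  rw [Finset.mul_sum, Finset.sum_eq_single r]
  · rw [mul_smul_comm, hE, if_pos rfl]
  · intro s _ hsr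
    rw [mul_smul_comm, hE, if_neg (fun h => hsr h.symm), smul_zero]
  · intro hr; exact absurd (Finset.mem_univ r) hr

lemma smul_cancel_of_ne_zero {F V : Type*} [Field F] [AddCommGroup V] [Module F V]
    {a b : F} {X : Module.End F V} (hX : X ≠ 0) (h : a • X = b • X) : a = b := by
  have h0 : (a - b) • X = 0 := by rw [sub_smul, h, sub_self]
  rcases smul_eq_zero.mp h0 with h1 | h1
  · exact sub_eq_zero.mp h1
  · exact absurd h1 hX

theorem stmt_14 (d : ℕ) (F V : Type*) [Field F] [AddCommGroup V] [Module F V]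
    [FiniteDimensional F V] (hdim : Module.finrank F V = d + 1)
    (E Es : Fin (d + 1) → Module.End F V)
    (hE : ∀ i j, E i * E j = if i = j then E i else 0)
    (hErk : ∀ i, Module.finrank F (LinearMap.range (E i)) = 1)
    (hEs : ∀ i j, Es i * Es j = if i = j then Es i else 0)
    (hEsrk : ∀ i, Module.finrank F (LinearMap.range (Es i)) = 1)
    (hnz : ∀ i, E 0 * Es i * E 0 ≠ 0)
    (hnzs : ∀ i, Es 0 * E i * Es 0 ≠ 0)
    (dag : Module.End F V ≃ₗ[F] Module.End F V)
    (hdagmul : ∀ Y Z, dag (Y * Z) = dag Z * dag Y)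
    (hdagE : ∀ i, dag (E i) = E i)
    (hdagEs : ∀ i, dag (Es i) = Es i)
    (A : Fin (d + 1) → Module.End F V)
    (hAmem : ∀ i, A i ∈ Submodule.span F (Set.range E))
    (hAdef : ∀ i, A i * (Es 0 * E 0) = Es i * E 0)
    (As : Fin (d + 1) → Module.End F V)
    (hAsmem : ∀ i, As i ∈ Submodule.span F (Set.range Es))
    (hAsdef : ∀ i, As i * (E 0 * Es 0) = E i * Es 0)
    (ν : F) (htr : LinearMap.trace F V (E 0 * Es 0) ≠ 0)
    (hν : ν = (LinearMap.trace F V (E 0 * Es 0))⁻¹)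
    (p : Fin (d + 1) → Fin (d + 1) → Fin (d + 1) → F)
    (hp : ∀ i j, A i * A j = ∑ h, p h i j • A h)
    (pe : Fin (d + 1) → Fin (d + 1) → F)
    (hpe : ∀ i j, A i * E j = pe i j • E j)
    (qe : Fin (d + 1) → Fin (d + 1) → F)
    (hqe : ∀ i j, As i * Es j = qe i j • Es j) :
    ∀ h i j, p h i j = ν⁻¹ * ∑ r, pe i r * pe j r * qe r h := by
  have hνne : ν ≠ 0 := by rw [hν]; exact inv_ne_zero htr
  -- nonvanishing of the idempotents
  have hEne : ∀ t, E t ≠ 0 := by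
    intro t h
    have := hErk t
    rw [h, LinearMap.range_zero, finrank_bot] at this
    exact one_ne_zero this.symm
  have hEsne : ∀ t, Es t ≠ 0 := by
    intro t h
    have := hEsrk t
    rw [h, LinearMap.range_zero, finrank_bot] at this
    exact one_ne_zero this.symm
  -- expansions of A and As
  have hAexp : ∀ i, A i = ∑ r, pe i r • E r := by
    intro i
    obtain ⟨c, hc⟩ := (Submodule.mem_span_range_iff_exists_fun F).mp (hAmem i)
    have hcr : ∀ j, c j = pe i j := by
      intro j
      have h1 : (∑ r, c r • E r) * E j = c j • E j := sum_smul_mul_single E hE c j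
      rw [hc, hpe i j] at h1
      exact (smul_cancel_of_ne_zero (hEne j) h1).symm
    rw [← hc]
    exact Finset.sum_congr rfl fun r _ => by rw [hcr r]
  have hAsexp : ∀ i, As i = ∑ s, qe i s • Es s := by
    intro i
    obtain ⟨c, hc⟩ := (Submodule.mem_span_range_iff_exists_fun F).mp (hAsmem i)
    have hcr : ∀ j, c j = qe i j := by
      intro j
      have h1 : (∑ r, c r • Es r) * Es j = c j • Es j := sum_smul_mul_single Es hEs c j
      rw [hc, hqe i j] at h1
      exact (smul_cancel_of_ne_zero (hEsne j) h1).symm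
    rw [← hc]
    exact Finset.sum_congr rfl fun r _ => by rw [hcr r]
  -- idempotency
  have hPP : ∀ t, E t * E t = E t := fun t => by simpa using hE t t
  have hPPs : ∀ t, Es t * Es t = Es t := fun t => by simpa using hEs t t
  -- rank-1 contraction facts
  have htrsym : LinearMap.trace F V (Es 0 * E 0) = LinearMap.trace F V (E 0 * Es 0) :=
    LinearMap.trace_mul_comm F (Es 0) (E 0)
  have hEsE : Es 0 * E 0 * Es 0 = ν⁻¹ • Es 0 := by
    have h := rk1_contract (Es 0) (E 0) (hPPs 0) (hEsrk 0)
    rw [htrsym] at h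
    rw [hν, inv_inv]
    exact h
  have htrE0Est : ∀ t, LinearMap.trace F V (E 0 * Es t) ≠ 0 := by
    intro t h0
    exact hnz t (by rw [rk1_contract (E 0) (Es t) (hPP 0) (hErk 0), h0, zero_smul])
  have hkey : ∀ t, Es t * (E 0 * Es 0) ≠ 0 := by
    intro t h
    have h2 : E 0 * (Es t * (E 0 * Es 0)) = 0 := by rw [h, mul_zero]
    have h4 : E 0 * Es t * E 0 * Es 0 = E 0 * (Es t * (E 0 * Es 0)) := by
      rw [mul_assoc (E 0 * Es t) (E 0) (Es 0), mul_assoc (E 0) (Es t) (E 0 * Es 0)]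
    rw [rk1_contract (E 0) (Es t) (hPP 0) (hErk 0), smul_mul_assoc, h, mul_zero] at h4
    have h3 := h4
    rcases smul_eq_zero.mp h3 with h4 | h4
    · exact htrE0Est t h4
    · exact htr (by rw [h4, map_zero])
  -- orthogonality relation
  have horth : ∀ k h, (∑ r, pe k r * qe r h) = if k = h then ν else 0 := by
    intro k h
    have hC : (∑ r, pe k r • As r) * (E 0 * Es 0) = A k * Es 0 := by
      rw [Finset.sum_mul]
      calc (∑ r, (pe k r • As r) * (E 0 * Es 0))
          = ∑ r, pe k r • (E r * Es 0) := by
            refine Finset.sum_congr rfl fun r _ => ?_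
            rw [smul_mul_assoc, hAsdef]
        _ = (∑ r, pe k r • E r) * Es 0 := by
            rw [Finset.sum_mul]
            exact Finset.sum_congr rfl fun r _ => (smul_mul_assoc _ _ _).symm
        _ = A k * Es 0 := by rw [← hAexp]
    have hN : (ν • Es k) * (E 0 * Es 0) = A k * Es 0 := by
      calc (ν • Es k) * (E 0 * Es 0)
          = ν • (Es k * E 0 * Es 0) := by rw [smul_mul_assoc, mul_assoc]
        _ = ν • (A k * (Es 0 * E 0) * Es 0) := by rw [hAdef]
        _ = ν • (A k * (Es 0 * E 0 * Es 0)) := by rw [mul_assoc (A k) (Es 0 * E 0) (Es 0)]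
        _ = ν • (A k * (ν⁻¹ • Es 0)) := by rw [hEsE]
        _ = (ν * ν⁻¹) • (A k * Es 0) := by rw [mul_smul_comm, smul_smul]
        _ = A k * Es 0 := by rw [mul_inv_cancel₀ hνne, one_smul]
    have hCexp : (∑ r, pe k r • As r)
        = ∑ s, (∑ r, pe k r * qe r s) • Es s := by
      calc (∑ r, pe k r • As r)
          = ∑ r, ∑ s, (pe k r * qe r s) • Es s := by
            refine Finset.sum_congr rfl fun r _ => ?_
            rw [hAsexp r, Finset.smul_sum]
            exact Finset.sum_congr rfl fun s _ => (smul_smul _ _ _)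
        _ = ∑ s, ∑ r, (pe k r * qe r s) • Es s := Finset.sum_comm
        _ = ∑ s, (∑ r, pe k r * qe r s) • Es s := by
            exact Finset.sum_congr rfl fun s _ => (Finset.sum_smul).symm
    have hNexp : (∑ s, (if k = s then ν else 0) • Es s) = ν • Es k := by
      rw [Finset.sum_eq_single k, if_pos rfl]
      · intro s _ hsk; rw [if_neg (fun hh => hsk hh.symm), zero_smul]
      · intro hk; exact absurd (Finset.mem_univ k) hk
    have hD : (∑ s, ((∑ r, pe k r * qe r s) - (if k = s then ν else 0)) • Es s)
        * (E 0 * Es 0) = 0 := by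
      have : (∑ s, ((∑ r, pe k r * qe r s) - (if k = s then ν else 0)) • Es s)
          = (∑ r, pe k r • As r) - (ν • Es k) := by
        rw [hCexp, ← hNexp, ← Finset.sum_sub_distrib]
        exact Finset.sum_congr rfl fun s _ => sub_smul _ _ _
      rw [this, sub_mul, hC, hN, sub_self]
    have hh : ((∑ r, pe k r * qe r h) - (if k = h then ν else 0))
        • (Es h * (E 0 * Es 0)) = 0 := by
      have h5 := single_mul_sum_smul Es hEs
        (fun s => ((∑ r, pe k r * qe r s) - (if k = s then ν else 0))) h
      calc ((∑ r, pe k r * qe r h) - (if k = h then ν else 0)) • (Es h * (E 0 * Es 0))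
          = (((∑ r, pe k r * qe r h) - (if k = h then ν else 0)) • Es h) * (E 0 * Es 0) := by
            rw [smul_mul_assoc]
        _ = (Es h * (∑ s, ((∑ r, pe k r * qe r s) - (if k = s then ν else 0)) • Es s))
              * (E 0 * Es 0) := by rw [h5]
        _ = Es h * ((∑ s, ((∑ r, pe k r * qe r s) - (if k = s then ν else 0)) • Es s)
              * (E 0 * Es 0)) := by rw [mul_assoc]
        _ = 0 := by rw [hD, mul_zero]
    rcases smul_eq_zero.mp hh with h6 | h6
    · exact sub_eq_zero.mp h6
    · exact absurd h6 (hkey h)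
  -- coefficients of A i * A j in the E basis
  have hEcoef : ∀ i j r, (∑ k, p k i j * pe k r) = pe i r * pe j r := by
    intro i j r
    have h1 : A i * A j = ∑ s, (pe i s * pe j s) • E s := by
      rw [hAexp j, Finset.mul_sum]
      refine Finset.sum_congr rfl fun s _ => ?_
      rw [mul_smul_comm, hpe i s, smul_smul, mul_comm (pe j s)]
    have h2 : A i * A j = ∑ s, (∑ k, p k i j * pe k s) • E s := by
      rw [hp i j]
      calc (∑ k, p k i j • A k)
          = ∑ k, ∑ s, (p k i j * pe k s) • E s := by
            refine Finset.sum_congr rfl fun k _ => ?_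
            rw [hAexp k, Finset.smul_sum]
            exact Finset.sum_congr rfl fun s _ => (smul_smul _ _ _)
        _ = ∑ s, ∑ k, (p k i j * pe k s) • E s := Finset.sum_comm
        _ = ∑ s, (∑ k, p k i j * pe k s) • E s := by
            exact Finset.sum_congr rfl fun s _ => (Finset.sum_smul).symm
    have h3 : (∑ s, (∑ k, p k i j * pe k s) • E s) * E r
        = (∑ s, (pe i s * pe j s) • E s) * E r := by rw [← h1, ← h2]
    rw [sum_smul_mul_single E hE, sum_smul_mul_single E hE] at h3
    exact smul_cancel_of_ne_zero (hEne r) h3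
  -- final assembly
  intro h i j
  have hsum : (∑ r, pe i r * pe j r * qe r h)
      = ∑ k, p k i j * (∑ r, pe k r * qe r h) := by
    calc (∑ r, pe i r * pe j r * qe r h)
        = ∑ r, (∑ k, p k i j * pe k r) * qe r h := by
          exact Finset.sum_congr rfl fun r _ => by rw [hEcoef i j r]
      _ = ∑ r, ∑ k, p k i j * (pe k r * qe r h) := by
          refine Finset.sum_congr rfl fun r _ => ?_
          rw [Finset.sum_mul]
          exact Finset.sum_congr rfl fun k _ => (mul_assoc _ _ _)
      _ = ∑ k, ∑ r, p k i j * (pe k r * qe r h) := Finset.sum_comm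
      _ = ∑ k, p k i j * (∑ r, pe k r * qe r h) := by
          exact Finset.sum_congr rfl fun k _ => (Finset.mul_sum _ _ _).symm
  rw [hsum]
  have : ∑ k, p k i j * (∑ r, pe k r * qe r h) = p h i j * ν := by
    calc (∑ k, p k i j * (∑ r, pe k r * qe r h))
        = ∑ k, p k i j * (if k = h then ν else 0) := by
          exact Finset.sum_congr rfl fun k _ => by rw [horth k h]
      _ = p h i j * ν := by
          rw [Finset.sum_eq_single h]
          · rw [if_pos rfl]
          · intro k _ hkh; rw [if_neg hkh, mul_zero]
          · intro hk; exact absurd (Finset.mem_univ h) hk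
  rw [this, mul_comm (p h i j) ν, ← mul_assoc, inv_mul_cancel₀ hνne, one_mul]
end

section
/- Let Φ = ({E_i}_{i=0}^d; {E*_i}_{i=0}^d) be an idempotent system on V, and let ξ be a nonzero vector in E_0 V. Then for 0 ≤ i ≤ d the vector E*_i ξ is nonzero (hence a basis of the one-dimensional space E*_i V), and the vectors {E*_i ξ}_{i=0}^d form a basis of V. -/
theorem stmt_15 (d : ℕ) (F V : Type*) [Field F] [AddCommGroup V] [Module F V]
    [FiniteDimensional F V] (hdim : Module.finrank F V = d + 1)
    (E Es : Fin (d + 1) → Module.End F V)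
    (hE : ∀ i j, E i * E j = if i = j then E i else 0)
    (hErk : ∀ i, Module.finrank F (LinearMap.range (E i)) = 1)
    (hEs : ∀ i j, Es i * Es j = if i = j then Es i else 0)
    (hEsrk : ∀ i, Module.finrank F (LinearMap.range (Es i)) = 1)
    (hnz : ∀ i, E 0 * Es i * E 0 ≠ 0)
    (hnzs : ∀ i, Es 0 * E i * Es 0 ≠ 0)
    (ξ : V) (hξmem : ξ ∈ LinearMap.range (E 0)) (hξ : ξ ≠ 0) :
    (∀ i, Es i ξ ≠ 0) ∧ LinearIndependent F (fun i => Es i ξ) ∧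
      Submodule.span F (Set.range (fun i => Es i ξ)) = ⊤ := by
  obtain ⟨w, hw⟩ := hξmem
  have hrange : LinearMap.range (E 0) = Submodule.span F {ξ} := by
    symm
    apply Submodule.eq_of_le_of_finrank_le
    · rw [Submodule.span_le, Set.singleton_subset_iff]; exact ⟨w, hw⟩
    · rw [hErk 0, finrank_span_singleton hξ]
  have hnzv : ∀ i, Es i ξ ≠ 0 := by
    intro i hcon
    apply hnz i
    ext v
    have hmem : E 0 v ∈ LinearMap.range (E 0) := ⟨v, rfl⟩
    rw [hrange, Submodule.mem_span_singleton] at hmem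
    obtain ⟨c, hc⟩ := hmem
    simp only [Module.End.mul_apply, LinearMap.zero_apply, ← hc, map_smul, hcon,
      smul_zero, map_zero]
  have hli : LinearIndependent F (fun i => Es i ξ) := by
    rw [Fintype.linearIndependent_iff]
    intro g hg j
    have h2 : Es j (∑ i, g i • Es i ξ) = g j • Es j ξ := by
      rw [map_sum]
      rw [Finset.sum_eq_single j]
      · rw [map_smul, ← Module.End.mul_apply, hEs j j, if_pos rfl]
      · intro i _ hij
        rw [map_smul, ← Module.End.mul_apply, hEs j i, if_neg (Ne.symm hij)]
        simp
      · simp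
    rw [hg, map_zero] at h2
    by_contra hgj
    exact hnzv j ((smul_eq_zero.1 h2.symm).resolve_left hgj)
  refine ⟨hnzv, hli, ?_⟩
  apply hli.span_eq_top_of_card_eq_finrank
  simp [hdim]
end

section
/- Let Φ = ({E_i}_{i=0}^d; {E*_i}_{i=0}^d) be a symmetric idempotent system on V with antiautomorphism †, and let ⟨ , ⟩ be a nonzero bilinear form on V satisfying ⟨Au, v⟩ = ⟨u, A^† v⟩ for all A ∈ End(V) and u,v ∈ V. Then ⟨ , ⟩ is symmetric: ⟨u,v⟩ = ⟨v,u⟩ for all u,v ∈ V. -/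
theorem stmt_16 (d : ℕ) (F V : Type*) [Field F] [AddCommGroup V] [Module F V]
    [FiniteDimensional F V] (hdim : Module.finrank F V = d + 1)
    (E Es : Fin (d + 1) → Module.End F V)
    (hE : ∀ i j, E i * E j = if i = j then E i else 0)
    (hErk : ∀ i, Module.finrank F (LinearMap.range (E i)) = 1)
    (hEs : ∀ i j, Es i * Es j = if i = j then Es i else 0)
    (hEsrk : ∀ i, Module.finrank F (LinearMap.range (Es i)) = 1)
    (hnz : ∀ i, E 0 * Es i * E 0 ≠ 0)
    (hnzs : ∀ i, Es 0 * E i * Es 0 ≠ 0)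
    (dag : Module.End F V ≃ₗ[F] Module.End F V)
    (hdagmul : ∀ Y Z, dag (Y * Z) = dag Z * dag Y)
    (hdagE : ∀ i, dag (E i) = E i)
    (hdagEs : ∀ i, dag (Es i) = Es i)
    (B : LinearMap.BilinForm F V) (hB0 : B ≠ 0)
    (hB : ∀ (X : Module.End F V) (u v : V), B (X u) v = B u (dag X v)) :
    ∀ u v, B u v = B v u := by
  -- pick a nonzero fixed vector in each range (E i)
  have hwex : ∀ i : Fin (d+1), ∃ w : V, E i w = w ∧ w ≠ 0 := by
    intro i
    have h1 := hErk i
    have hne : LinearMap.range (E i) ≠ ⊥ := by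
      intro h
      rw [h] at h1
      simp at h1
    obtain ⟨w, hwmem, hwne⟩ := Submodule.exists_mem_ne_zero_of_ne_bot hne
    obtain ⟨x, hx⟩ := hwmem
    refine ⟨w, ?_, hwne⟩
    have : E i (E i x) = (E i * E i) x := rfl
    rw [← hx, this, hE i i, if_pos rfl, hx]
  choose w hwfix hwne using hwex
  -- orthogonality action
  have hEw : ∀ i j : Fin (d+1), E j (w i) = if i = j then w i else 0 := by
    intro i j
    have : E j (w i) = (E j * E i) (w i) := by
      conv_lhs => rw [← hwfix i]
      rfl
    rw [this, hE j i]
    by_cases h : i = j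
    · subst h; simp [hwfix]
    · rw [if_neg (fun hji => h hji.symm), if_neg h]; rfl
  -- the w i are linearly independent
  have hli : LinearIndependent F w := by
    rw [Fintype.linearIndependent_iff]
    intro g hg j
    have : E j (∑ i, g i • w i) = g j • w j := by
      rw [map_sum]
      rw [Finset.sum_eq_single j]
      · rw [map_smul, hEw j j, if_pos rfl]
      · intro i _ hij
        rw [map_smul, hEw i j, if_neg hij, smul_zero]
      · intro h; exact absurd (Finset.mem_univ j) h
    rw [hg, map_zero] at this
    have := this.symm
    rcases smul_eq_zero.mp this with h | h
    · exact h
    · exact absurd h (hwne j)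
  -- they form a basis
  have hcard : Fintype.card (Fin (d+1)) = Module.finrank F V := by
    simp [hdim]
  let b := basisOfLinearIndependentOfCardEqFinrank hli hcard
  have hb : ∀ i, b i = w i := fun i => by
    simp [b, coe_basisOfLinearIndependentOfCardEqFinrank]
  -- sum of the E i is the identity
  have hsum : ∀ x : V, ∑ i, E i x = x := by
    have hP : (∑ i, E i : Module.End F V) = LinearMap.id := by
      apply b.ext
      intro j
      rw [hb j]
      simp only [LinearMap.sum_apply, LinearMap.id_apply]
      rw [Finset.sum_eq_single j]
      · rw [hEw j j, if_pos rfl]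
      · intro i _ hij
        rw [hEw j i, if_neg (fun h => hij h.symm)]
      · intro h; exact absurd (Finset.mem_univ j) h
    intro x
    have := congrArg (fun (T : Module.End F V) => T x) hP
    simpa using this
  -- range (E i) = span {w i}
  have hrange : ∀ i, LinearMap.range (E i) = Submodule.span F {w i} := by
    intro i
    have hle : Submodule.span F {w i} ≤ LinearMap.range (E i) := by
      rw [Submodule.span_singleton_le_iff_mem]
      exact ⟨w i, hwfix i⟩
    have hfr : Module.finrank F (Submodule.span F {w i}) = 1 :=
      finrank_span_singleton (hwne i)
    symm
    apply Submodule.eq_of_le_of_finrank_le hle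
    rw [hErk i, hfr]
  -- each E i u is a multiple of w i
  have hmul : ∀ (i : Fin (d+1)) (x : V), ∃ c : F, E i x = c • w i := by
    intro i x
    have : E i x ∈ LinearMap.range (E i) := ⟨x, rfl⟩
    rw [hrange i, Submodule.mem_span_singleton] at this
    obtain ⟨c, hc⟩ := this
    exact ⟨c, hc.symm⟩
  -- key termwise symmetry
  have hterm : ∀ (i j : Fin (d+1)) (u v : V),
      B (E i u) (E j v) = B (E j v) (E i u) := by
    intro i j u v
    by_cases h : i = j
    · subst h
      obtain ⟨c, hc⟩ := hmul i u
      obtain ⟨e, he⟩ := hmul i v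
      rw [hc, he]
      simp only [map_smul, LinearMap.smul_apply, smul_eq_mul]
      ring
    · have h1 : B (E i u) (E j v) = 0 := by
        rw [hB (E i) u (E j v), hdagE i]
        have : E i (E j v) = (E i * E j) v := rfl
        rw [this, hE i j, if_neg h]
        simp
      have h2 : B (E j v) (E i u) = 0 := by
        rw [hB (E j) v (E i u), hdagE j]
        have : E j (E i u) = (E j * E i) u := rfl
        rw [this, hE j i, if_neg (fun hji => h hji.symm)]
        simp
      rw [h1, h2]
  intro u v
  calc B u v = B (∑ i, E i u) (∑ j, E j v) := by rw [hsum u, hsum v]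
    _ = ∑ i, ∑ j, B (E i u) (E j v) := by
        simp only [map_sum, LinearMap.sum_apply]
        exact Finset.sum_comm
    _ = ∑ i, ∑ j, B (E j v) (E i u) :=
        Finset.sum_congr rfl (fun i _ => Finset.sum_congr rfl
          (fun j _ => hterm i j u v))
    _ = ∑ j, ∑ i, B (E j v) (E i u) := Finset.sum_comm
    _ = B (∑ j, E j v) (∑ i, E i u) := by
        simp only [map_sum, LinearMap.sum_apply]
        exact Finset.sum_comm
    _ = B v u := by rw [hsum u, hsum v]
end

section
/- Let Φ = ({E_i}_{i=0}^d; {E*_i}_{i=0}^d) be a symmetric idempotent system on V with antiautomorphism †, let ⟨ , ⟩ be a nonzero bilinear form on V satisfying ⟨Au, v⟩ = ⟨u, A^† v⟩ for all A ∈ End(V) and u,v ∈ V, set ν = tr(E_0 E*_0)^{-1}, and define k_i by A_i E_0 = k_i E_0. Then for any ξ ∈ E_0 V and 0 ≤ i,j ≤ d, ⟨E*_i ξ, E*_j ξ⟩ = δ_{ij} ν^{-1} k_i ⟨ξ, ξ⟩. -/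
theorem stmt_17 (d : ℕ) (F V : Type*) [Field F] [AddCommGroup V] [Module F V]
    [FiniteDimensional F V] (hdim : Module.finrank F V = d + 1)
    (E Es : Fin (d + 1) → Module.End F V)
    (hE : ∀ i j, E i * E j = if i = j then E i else 0)
    (hErk : ∀ i, Module.finrank F (LinearMap.range (E i)) = 1)
    (hEs : ∀ i j, Es i * Es j = if i = j then Es i else 0)
    (hEsrk : ∀ i, Module.finrank F (LinearMap.range (Es i)) = 1)
    (hnz : ∀ i, E 0 * Es i * E 0 ≠ 0)
    (hnzs : ∀ i, Es 0 * E i * Es 0 ≠ 0)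
    (dag : Module.End F V ≃ₗ[F] Module.End F V)
    (hdagmul : ∀ Y Z, dag (Y * Z) = dag Z * dag Y)
    (hdagE : ∀ i, dag (E i) = E i)
    (hdagEs : ∀ i, dag (Es i) = Es i)
    (A : Fin (d + 1) → Module.End F V)
    (hAmem : ∀ i, A i ∈ Submodule.span F (Set.range E))
    (hAdef : ∀ i, A i * (Es 0 * E 0) = Es i * E 0)
    (ν : F) (htr : LinearMap.trace F V (E 0 * Es 0) ≠ 0)
    (hν : ν = (LinearMap.trace F V (E 0 * Es 0))⁻¹)
    (k : Fin (d + 1) → F) (hk : ∀ i, A i * E 0 = k i • E 0)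
    (B : LinearMap.BilinForm F V) (hB0 : B ≠ 0)
    (hB : ∀ (X : Module.End F V) (u v : V), B (X u) v = B u (dag X v)) :
    ∀ ξ ∈ LinearMap.range (E 0), ∀ i j,
      B (Es i ξ) (Es j ξ) = (if i = j then ν⁻¹ * k i else 0) * B ξ ξ := by
  have hE00 : E 0 * E 0 = E 0 := by simpa using hE 0 0
  -- E 0 is a projection onto its range
  have hproj : LinearMap.IsProj (LinearMap.range (E 0)) (E 0) := by
    constructor
    · intro x; exact ⟨x, rfl⟩
    · rintro x ⟨u, rfl⟩
      calc E 0 (E 0 u) = (E 0 * E 0) u := rfl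
        _ = E 0 u := by rw [hE00]
  have htrE0 : LinearMap.trace F V (E 0) = 1 := by
    rw [hproj.trace, hErk 0, Nat.cast_one]
  -- the rank-one compression lemma
  have hw : ∃ v : V, v ∈ LinearMap.range (E 0) ∧ v ≠ 0 ∧
      ∀ x ∈ LinearMap.range (E 0), ∃ c : F, c • v = x := by
    obtain ⟨v, hv0, hv⟩ := finrank_eq_one_iff'.mp (hErk 0)
    refine ⟨(v : V), v.2, fun h => hv0 (Subtype.ext h), fun x hx => ?_⟩
    obtain ⟨c, hc⟩ := hv ⟨x, hx⟩
    exact ⟨c, congrArg Subtype.val hc⟩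
  obtain ⟨w, hwmem, hwne, hwspan⟩ := hw
  have hE0w : E 0 w = w := hproj.2 w hwmem
  have key : ∀ Y : Module.End F V,
      E 0 * Y * E 0 = (LinearMap.trace F V (E 0 * Y)) • E 0 := by
    intro Y
    obtain ⟨c, hc⟩ := hwspan (E 0 (Y w)) ⟨Y w, rfl⟩
    have heq : E 0 * Y * E 0 = c • E 0 := by
      apply LinearMap.ext
      intro v
      obtain ⟨a, ha⟩ := hwspan (E 0 v) ⟨v, rfl⟩
      have h0 : (E 0 * Y * E 0) v = E 0 (Y (E 0 v)) := rfl
      rw [h0, ← ha, map_smul, map_smul, ← hc, LinearMap.smul_apply, ← ha,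
        smul_comm]
    have htr2 : LinearMap.trace F V (E 0 * Y) = c := by
      have h1 : E 0 * Y = E 0 * (E 0 * Y) := by rw [← mul_assoc, hE00]
      calc LinearMap.trace F V (E 0 * Y)
          = LinearMap.trace F V (E 0 * (E 0 * Y)) := by rw [← h1]
        _ = LinearMap.trace F V ((E 0 * Y) * E 0) := LinearMap.trace_mul_comm F _ _
        _ = LinearMap.trace F V (c • E 0) := by rw [heq]
        _ = c * LinearMap.trace F V (E 0) := by rw [map_smul]; rfl
        _ = c := by rw [htrE0, mul_one]
    rw [htr2, heq]
  -- E 0 commutes with each A i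
  have hcomm' : ∀ a ∈ Submodule.span F (Set.range E), E 0 * a = a * E 0 := by
    intro a ha
    induction ha using Submodule.span_induction with
    | mem x hx =>
      obtain ⟨l, rfl⟩ := hx
      rw [hE 0 l, hE l 0]
      by_cases h : l = 0
      · subst h; simp
      · simp [h, Ne.symm h]
    | zero => simp
    | add x y hx hy ihx ihy => rw [mul_add, add_mul, ihx, ihy]
    | smul a x hx ih => rw [mul_smul_comm, smul_mul_assoc, ih]
  have hcomm : ∀ i, E 0 * A i = A i * E 0 := fun i => hcomm' _ (hAmem i)
  intro ξ hξ i j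
  have hE0ξ : E 0 ξ = ξ := hproj.2 ξ hξ
  have step1 : B (Es i ξ) (Es j ξ) = B ξ ((Es i * Es j) ξ) := by
    rw [hB (Es i) ξ (Es j ξ), hdagEs]; rfl
  by_cases hij : i = j
  · subst hij
    simp only [if_pos rfl]
    rw [step1, hEs, if_pos rfl]
    have h2 : B ξ (Es i ξ) = B ξ ((E 0 * Es i * E 0) ξ) := by
      have hx : (E 0 * Es i * E 0) ξ = E 0 (Es i ξ) := by
        show E 0 (Es i (E 0 ξ)) = _
        rw [hE0ξ]
      rw [hx]
      calc B ξ (Es i ξ) = B (E 0 ξ) (Es i ξ) := by rw [hE0ξ]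
        _ = B ξ (E 0 (Es i ξ)) := by rw [hB (E 0) ξ (Es i ξ), hdagE]
    have h3 : E 0 * Es i * E 0 = (k i * LinearMap.trace F V (E 0 * Es 0)) • E 0 := by
      have hEsE : Es i * E 0 = A i * Es 0 * E 0 := by rw [mul_assoc, hAdef]
      calc E 0 * Es i * E 0 = E 0 * (Es i * E 0) := by rw [mul_assoc]
        _ = E 0 * (A i * Es 0 * E 0) := by rw [hEsE]
        _ = (E 0 * A i) * Es 0 * E 0 := by rw [← mul_assoc, ← mul_assoc]
        _ = (A i * E 0) * Es 0 * E 0 := by rw [hcomm]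
        _ = (k i • E 0) * Es 0 * E 0 := by rw [hk]
        _ = k i • (E 0 * Es 0 * E 0) := by rw [smul_mul_assoc, smul_mul_assoc]
        _ = k i • ((LinearMap.trace F V (E 0 * Es 0)) • E 0) := by rw [key]
        _ = (k i * LinearMap.trace F V (E 0 * Es 0)) • E 0 := by rw [smul_smul]
    rw [h2, h3]
    have : ((k i * LinearMap.trace F V (E 0 * Es 0)) • E 0) ξ
        = (k i * LinearMap.trace F V (E 0 * Es 0)) • ξ := by
      rw [LinearMap.smul_apply, hE0ξ]
    rw [this, map_smul, hν, inv_inv, smul_eq_mul, if_true]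
    ring
  · simp only [if_neg hij]
    rw [step1, hEs, if_neg hij]
    simp
end

section
/- Let Φ = ({E_i}_{i=0}^d; {E*_i}_{i=0}^d) be a symmetric idempotent system on V with antiautomorphism †, let ⟨ , ⟩ be a nonzero bilinear form on V satisfying ⟨Au, v⟩ = ⟨u, A^† v⟩ for all A ∈ End(V) and u,v ∈ V, and set ν = tr(E_0 E*_0)^{-1}. Then for any nonzero ξ ∈ E_0 V and nonzero ξ* ∈ E*_0 V: each of ⟨ξ,ξ⟩, ⟨ξ*,ξ*⟩, ⟨ξ, ξ*⟩ is nonzero, and ⟨ξ,ξ⟩ ⟨ξ*,ξ*⟩ = ν ⟨ξ, ξ*⟩². -/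
/-!
Write `P = E₀`, `Q = E*₀`. Both are rank-one idempotents that are self-adjoint for `⟨ , ⟩`, so
`P ξ* = b ξ` and `Q ξ = a ξ*` for scalars `a, b`, and `PQP = ab P` gives `tr(PQ) = ab = ν⁻¹`.
Self-adjointness yields `⟨ξ, ξ*⟩ = b ⟨ξ, ξ⟩ = a ⟨ξ*, ξ*⟩`, whence the identity. The form is
left-separating because `End(V)` acts transitively on nonzero vectors and `†` moves endomorphisms
to the other side; since `⟨ξ, v⟩ = ⟨ξ, P v⟩` is a multiple of `⟨ξ, ξ⟩`, this forces `⟨ξ, ξ⟩ ≠ 0`.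
-/

open LinearMap Module

section

variable {K V : Type*} [Field K] [AddCommGroup V] [Module K V]

theorem exists_apply_eq_smul_of_finrank_range_eq_one {P : Module.End K V}
    (hP : finrank K (range P) = 1) {ξ : V} (hξmem : ξ ∈ range P) (hξ : ξ ≠ 0) (v : V) :
    ∃ c : K, P v = c • ξ := by
  obtain ⟨c, hc⟩ := (finrank_eq_one_iff_of_nonzero' (⟨ξ, hξmem⟩ : range P)
    (by simpa using hξ)).mp hP ⟨P v, mem_range_self P v⟩
  exact ⟨c, congrArg Subtype.val hc.symm⟩

theorem trace_mul_eq_of_apply_apply_eq_smul [FiniteDimensional K V] {P Q : Module.End K V}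
    (hP : IsIdempotentElem P) (hrk : finrank K (range P) = 1) {ξ : V} (hξmem : ξ ∈ range P)
    (hξ : ξ ≠ 0) {c : K} (hc : P (Q ξ) = c • ξ) :
    trace K V (P * Q) = c := by
  have hPQP : P * Q * P = c • P := by
    ext v
    obtain ⟨t, ht⟩ := exists_apply_eq_smul_of_finrank_range_eq_one hrk hξmem hξ v
    simp only [Module.End.mul_apply, LinearMap.smul_apply, ht, map_smul, hc, smul_smul, mul_comm]
  have htrP : trace K V P = 1 := by
    rw [hP.isProj_range.trace, hrk, Nat.cast_one]
  calc trace K V (P * Q) = trace K V (P * Q * P) := by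
        rw [mul_assoc, trace_mul_comm (f := P) (g := Q * P), mul_assoc, hP.eq, trace_mul_comm]
    _ = c := by rw [hPQP, map_smul, htrP, smul_eq_mul, mul_one]

theorem LinearMap.BilinForm.separatingLeft_of_ne_zero_of_isAdjointPair
    {B : LinearMap.BilinForm K V} (dag : Module.End K V → Module.End K V) (hB0 : B ≠ 0)
    (hB : ∀ X : Module.End K V, IsAdjointPair B B X (dag X)) :
    B.SeparatingLeft := by
  intro w hw
  by_contra hw0
  obtain ⟨φ, hφ⟩ := Projective.exists_dual_eq_one K hw0
  refine hB0 (ext fun u v => ?_)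
  calc B u v = B (φ.smulRight u w) v := by rw [smulRight_apply, hφ, one_smul]
    _ = 0 := by rw [hB, hw]

variable {B : LinearMap.BilinForm K V} {P : Module.End K V} {ξ η : V} {c : K}

theorem LinearMap.IsSelfAdjoint.apply_eq_mul_apply_self (hP : B.IsSelfAdjoint P)
    (hPξ : P ξ = ξ) (hPη : P η = c • ξ) : B ξ η = c * B ξ ξ :=
  calc B ξ η = B (P ξ) η := by rw [hPξ]
    _ = B ξ (P η) := hP ξ η
    _ = c * B ξ ξ := by rw [hPη, map_smul, smul_eq_mul]

theorem LinearMap.IsSelfAdjoint.apply_eq_mul_apply_self' (hP : B.IsSelfAdjoint P)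
    (hPξ : P ξ = ξ) (hPη : P η = c • ξ) : B η ξ = c * B ξ ξ :=
  calc B η ξ = B η (P ξ) := by rw [hPξ]
    _ = B (P η) ξ := (hP η ξ).symm
    _ = c * B ξ ξ := by rw [hPη, map_smul, LinearMap.smul_apply, smul_eq_mul]

theorem LinearMap.SeparatingLeft.apply_self_ne_zero_of_isSelfAdjoint (hB : B.SeparatingLeft)
    (hP : B.IsSelfAdjoint P) (hPidem : IsIdempotentElem P) (hrk : finrank K (range P) = 1)
    (hξmem : ξ ∈ range P) (hξ : ξ ≠ 0) : B ξ ξ ≠ 0 := by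
  intro hξξ
  refine hξ (hB ξ fun v => ?_)
  obtain ⟨t, ht⟩ := exists_apply_eq_smul_of_finrank_range_eq_one hrk hξmem hξ v
  rw [hP.apply_eq_mul_apply_self (hPidem.mem_range_iff.mp hξmem) ht, hξξ, mul_zero]

end

theorem stmt_18_general (d : ℕ) (F V : Type*) [Field F] [AddCommGroup V] [Module F V]
    [FiniteDimensional F V]
    (E Es : Fin (d + 1) → Module.End F V)
    (hE : ∀ i j, E i * E j = if i = j then E i else 0)
    (hErk : ∀ i, Module.finrank F (LinearMap.range (E i)) = 1)
    (hEs : ∀ i j, Es i * Es j = if i = j then Es i else 0)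
    (hEsrk : ∀ i, Module.finrank F (LinearMap.range (Es i)) = 1)
    (dag : Module.End F V ≃ₗ[F] Module.End F V)
    (hdagE : ∀ i, dag (E i) = E i)
    (hdagEs : ∀ i, dag (Es i) = Es i)
    (ν : F) (htr : LinearMap.trace F V (E 0 * Es 0) ≠ 0)
    (hν : ν = (LinearMap.trace F V (E 0 * Es 0))⁻¹)
    (B : LinearMap.BilinForm F V) (hB0 : B ≠ 0)
    (hB : ∀ (X : Module.End F V) (u v : V), B (X u) v = B u (dag X v))
    (ξ ξs : V) (hξmem : ξ ∈ LinearMap.range (E 0)) (hξ : ξ ≠ 0)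
    (hξsmem : ξs ∈ LinearMap.range (Es 0)) (hξs : ξs ≠ 0) :
    B ξ ξ ≠ 0 ∧ B ξs ξs ≠ 0 ∧ B ξ ξs ≠ 0 ∧
      B ξ ξ * B ξs ξs = ν * (B ξ ξs) ^ 2 := by
  have hEidem : IsIdempotentElem (E 0) := (hE 0 0).trans (if_pos rfl)
  have hEsidem : IsIdempotentElem (Es 0) := (hEs 0 0).trans (if_pos rfl)
  have hEξ : E 0 ξ = ξ := hEidem.mem_range_iff.mp hξmem
  have hEsξs : Es 0 ξs = ξs := hEsidem.mem_range_iff.mp hξsmem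
  have hEsa : B.IsSelfAdjoint (E 0) := fun u v => by rw [hB, hdagE]
  have hEssa : B.IsSelfAdjoint (Es 0) := fun u v => by rw [hB, hdagEs]
  have hsep := BilinForm.separatingLeft_of_ne_zero_of_isAdjointPair dag hB0 hB
  obtain ⟨a, ha⟩ := exists_apply_eq_smul_of_finrank_range_eq_one (hEsrk 0) hξsmem hξs ξ
  obtain ⟨b, hb⟩ := exists_apply_eq_smul_of_finrank_range_eq_one (hErk 0) hξmem hξ ξs
  have htrace : trace F V (E 0 * Es 0) = a * b :=
    trace_mul_eq_of_apply_apply_eq_smul hEidem (hErk 0) hξmem hξ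
      (by rw [ha, map_smul, hb, smul_smul])
  have hab : a * b ≠ 0 := htrace ▸ htr
  have hξξ := hsep.apply_self_ne_zero_of_isSelfAdjoint hEsa hEidem (hErk 0) hξmem hξ
  have hξsξs := hsep.apply_self_ne_zero_of_isSelfAdjoint hEssa hEsidem (hEsrk 0) hξsmem hξs
  have hb' : B ξ ξs = b * B ξ ξ := hEsa.apply_eq_mul_apply_self hEξ hb
  have ha' : B ξ ξs = a * B ξs ξs := hEssa.apply_eq_mul_apply_self' hEsξs ha
  refine ⟨hξξ, hξsξs, hb' ▸ mul_ne_zero (right_ne_zero_of_mul hab) hξξ, ?_⟩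
  calc B ξ ξ * B ξs ξs = (a * b)⁻¹ * ((b * B ξ ξ) * (a * B ξs ξs)) := by
        rw [mul_mul_mul_comm, ← mul_assoc, mul_comm b a, inv_mul_cancel₀ hab, one_mul]
    _ = ν * B ξ ξs ^ 2 := by rw [hν, htrace, sq, ← hb', ← ha']

theorem stmt_18 (d : ℕ) (F V : Type*) [Field F] [AddCommGroup V] [Module F V]
    [FiniteDimensional F V] (hdim : Module.finrank F V = d + 1)
    (E Es : Fin (d + 1) → Module.End F V)
    (hE : ∀ i j, E i * E j = if i = j then E i else 0)
    (hErk : ∀ i, Module.finrank F (LinearMap.range (E i)) = 1)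
    (hEs : ∀ i j, Es i * Es j = if i = j then Es i else 0)
    (hEsrk : ∀ i, Module.finrank F (LinearMap.range (Es i)) = 1)
    (hnz : ∀ i, E 0 * Es i * E 0 ≠ 0)
    (hnzs : ∀ i, Es 0 * E i * Es 0 ≠ 0)
    (dag : Module.End F V ≃ₗ[F] Module.End F V)
    (hdagmul : ∀ Y Z, dag (Y * Z) = dag Z * dag Y)
    (hdagE : ∀ i, dag (E i) = E i)
    (hdagEs : ∀ i, dag (Es i) = Es i)
    (ν : F) (htr : LinearMap.trace F V (E 0 * Es 0) ≠ 0)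
    (hν : ν = (LinearMap.trace F V (E 0 * Es 0))⁻¹)
    (B : LinearMap.BilinForm F V) (hB0 : B ≠ 0)
    (hB : ∀ (X : Module.End F V) (u v : V), B (X u) v = B u (dag X v))
    (ξ ξs : V) (hξmem : ξ ∈ LinearMap.range (E 0)) (hξ : ξ ≠ 0)
    (hξsmem : ξs ∈ LinearMap.range (Es 0)) (hξs : ξs ≠ 0) :
    B ξ ξ ≠ 0 ∧ B ξs ξs ≠ 0 ∧ B ξ ξs ≠ 0 ∧
      B ξ ξ * B ξs ξs = ν * (B ξ ξs) ^ 2 :=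
  stmt_18_general d F V E Es hE hErk hEs hEsrk dag hdagE hdagEs ν htr hν B hB0 hB ξ ξs hξmem hξ
    hξsmem hξs
end

section
/- Let Φ = ({E_i}_{i=0}^d; {E*_i}_{i=0}^d) be a symmetric idempotent system on V with d ≥ 1, and let A ∈ End(V). Then the following are equivalent: (i) Φ is P-polynomial and A = α A_1 + β I for some scalars α, β with α ≠ 0; (ii) for 0 ≤ i ≤ d there exists a polynomial f_i ∈ F[x] of degree exactly i such that A_i = f_i(A). -/
/-!
Fix `u ≠ 0` in `E₀V`. Since `A_i E*₀ E₀ = E*_i E₀`, evaluation at `E*₀ u` sends `A_i` to the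
nonzero vector `E*_i u` of `E*_i V`. Hence the `A_i` are linearly independent, so the `p^h_{ij}`
are the coordinates of `A_i A_j`; and the `E*_i u` form a basis of `V` fixed by `A_0` (which
commutes with every `A_i`), so `A_0 = 1`.

(ii) ⇒ (i): `f_i f_j - c f_{i+j}` has degree `< i + j` for the right `c ≠ 0`, so it is a
combination of the `f_h` with `h < i + j`; applying `aeval X` shows `p^h_{ij} = 0` for
`h > i + j` and `p^{i+j}_{ij} = c`. The two other cases of P-polynomiality follow because
`M` is commutative and `t_h p^h_{ij} = t_j p^j_{ih}`, where `E₀ E*_l E₀ = t_l E₀` with `t_l ≠ 0`: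
apply `†` to `E₀ E*_j A_i E*_h E₀ = t_j p^j_{ih} E₀`.

(i) ⇒ (ii): `X A_j ≡ α p^{j+1}_{1j} A_{j+1}` modulo the span of `A_0, …, A_j`, so by induction
`A_{j+1}` is a polynomial of degree `j + 1` in `X`.
-/

open Module Polynomial Submodule LinearMap

theorem sum_smul_sub_smul_eq {R M ι : Type*} [Ring R] [AddCommGroup M] [Module R M] [Fintype ι]
    [DecidableEq ι] (v : ι → M) (c : ι → R) (a : ι) (b : R) :
    ∑ i, c i • v i - b • v a = ∑ i, (c i - (Pi.single a b : ι → R) i) • v i := by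
  simp [sub_smul, Finset.sum_sub_distrib, Pi.single_apply]

section SpanCoordinates

variable {R M ι : Type*} [Semiring R] [AddCommMonoid M] [Module R M] [Fintype ι]

theorem sum_smul_mem_span_image {v : ι → M} {c : ι → R} {s : Set ι}
    (hc : ∀ i ∉ s, c i = 0) : ∑ i, c i • v i ∈ span R (v '' s) := by
  refine sum_mem fun i _ => ?_
  by_cases hi : i ∈ s
  · exact smul_mem _ _ (subset_span (Set.mem_image_of_mem v hi))
  · simp [hc i hi]

theorem LinearIndependent.sum_smul_mem_span_image_iff {v : ι → M} (hv : LinearIndependent R v)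
    {c : ι → R} {s : Set ι} : ∑ i, c i • v i ∈ span R (v '' s) ↔ ∀ i ∉ s, c i = 0 := by
  refine ⟨fun h i hi => ?_, sum_smul_mem_span_image⟩
  obtain ⟨l, hl, hlc⟩ := (Finsupp.mem_span_image_iff_linearCombination R).1 h
  have : l = Finsupp.equivFunOnFinite.symm c := hv.finsuppLinearCombination_injective <| by
    rw [hlc, Finsupp.linearCombination_apply, Finsupp.sum_fintype] <;> simp
  simpa [this] using (Finsupp.mem_supported' R _).1 hl i hi

end SpanCoordinates

section PolynomialFamilies

variable {F R : Type*} [Field F] [Ring R] [Algebra F R]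

theorem mem_span_image_of_degree_lt {m : ℕ} {f : Fin (m + 1) → F[X]}
    (hf : ∀ i, (f i).degree = (i : ℕ)) {k : ℕ} (hk : k ≤ m + 1) {g : F[X]} (hg : g.degree < k) :
    g ∈ span F (f '' {i | (i : ℕ) < k}) := by
  let S : Sequence F :=
    ⟨fun n => if h : n < m + 1 then f ⟨n, h⟩ else X ^ n, fun n => by
      split_ifs with h
      · exact hf _
      · exact degree_X_pow n⟩
  have hS : S '' Set.Iio k = f '' {i | (i : ℕ) < k} := by
    ext q
    constructor
    · rintro ⟨n, hn, rfl⟩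
      have hnm : n < m + 1 := lt_of_lt_of_le hn hk
      exact ⟨⟨n, hnm⟩, hn, by simp [S, hnm]⟩
    · rintro ⟨i, hi, rfl⟩
      exact ⟨i, hi, by simp [S, i.isLt]⟩
  rw [← hS, S.span_degreeLT fun i _ => (leadingCoeff_ne_zero.2 (S.ne_zero i)).isUnit]
  exact mem_degreeLT.2 hg

theorem aeval_mem_span_image {ι : Type*} {x : R} {f : ι → F[X]} {s : Set ι} {g : F[X]}
    (hg : g ∈ span F (f '' s)) : aeval x g ∈ span F ((fun i => aeval x (f i)) '' s) := by
  have := mem_map_of_mem (f := (aeval x).toLinearMap) hg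
  rwa [Submodule.map_span, ← Set.image_comp] at this

theorem exists_degree_eq_aeval_of_mul_sub_smul_mem {x b : R} {f : F[X]} {k : ℕ}
    (hf : f.degree = k) {c : F} (hc : c ≠ 0)
    (hb : x * aeval x f - c • b ∈ (degreeLT F (k + 1)).map (aeval x).toLinearMap) :
    ∃ g : F[X], g.degree = (k + 1 : ℕ) ∧ b = aeval x g := by
  obtain ⟨r, hr, hrb⟩ := mem_map.1 hb
  have hXf : (X * f).degree = ((k + 1 : ℕ) : WithBot ℕ) := by
    rw [degree_mul, degree_X, hf]; norm_cast; omega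
  refine ⟨C c⁻¹ * (X * f - r), ?_, ?_⟩
  · rw [degree_C_mul (inv_ne_zero hc), degree_sub_eq_left_of_degree_lt (hXf ▸ mem_degreeLT.1 hr),
      hXf]
  · simp only [AlgHom.toLinearMap_apply] at hrb
    rw [map_mul, map_sub, hrb, map_mul, aeval_X, aeval_C, sub_sub_cancel,
      Algebra.algebraMap_eq_smul_one, smul_one_mul, smul_smul, inv_mul_cancel₀ hc, one_smul]

theorem exists_degree_eq_aeval_of_mul_sub_smul_mem_span {d : ℕ} {A : Fin (d + 1) → R} {x : R}
    (h0 : A 0 = 1)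
    (hstep : ∀ j k : Fin (d + 1), (k : ℕ) = j + 1 →
      ∃ c : F, c ≠ 0 ∧ x * A j - c • A k ∈ span F (A '' {l | (l : ℕ) < k}))
    (i : Fin (d + 1)) : ∃ f : F[X], f.degree = (i : ℕ) ∧ A i = aeval x f := by
  obtain ⟨i, hi⟩ := i
  induction i using Nat.strong_induction_on with
  | _ i ih =>
    rcases i with _ | j
    · exact ⟨1, by simp, by simpa [aeval_one] using h0⟩
    · obtain ⟨f, hf, hAf⟩ := ih j (by omega) (by omega)
      obtain ⟨c, hc, hmem⟩ := hstep ⟨j, by omega⟩ ⟨j + 1, hi⟩ rfl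
      have hspan : span F (A '' {l | (l : ℕ) < j + 1}) ≤
          (degreeLT F (j + 1)).map (aeval x).toLinearMap := by
        refine span_le.2 ?_
        rintro _ ⟨l, hl, rfl⟩
        obtain ⟨g, hg, hAg⟩ := ih l hl l.isLt
        exact ⟨g, mem_degreeLT.2 (by rw [hg]; exact_mod_cast hl), hAg.symm⟩
      rw [hAf] at hmem
      exact exists_degree_eq_aeval_of_mul_sub_smul_mem hf hc (hspan hmem)

theorem exists_mul_sub_smul_mem_span_of_degree_eq {d : ℕ} {A : Fin (d + 1) → R} {x : R}
    {f : Fin (d + 1) → F[X]} (hf : ∀ i, (f i).degree = (i : ℕ)) (hAf : ∀ i, A i = aeval x (f i))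
    {h i j : Fin (d + 1)} (hh : (h : ℕ) = i + j) :
    ∃ c : F, c ≠ 0 ∧ A i * A j - c • A h ∈ span F (A '' {l | (l : ℕ) < h}) := by
  have hne : ∀ l, f l ≠ 0 := fun l => by simp [← degree_ne_bot, hf l]
  set c := (f i * f j).leadingCoeff / (f h).leadingCoeff
  have hc : c ≠ 0 := div_ne_zero (leadingCoeff_ne_zero.2 (mul_ne_zero (hne i) (hne j)))
    (leadingCoeff_ne_zero.2 (hne h))
  have hdeg : (f i * f j).degree = (C c * f h).degree := by
    rw [degree_mul, degree_C_mul hc, hf, hf, hf, hh]; norm_cast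
  have hlt : (f i * f j - C c * f h).degree < (h : ℕ) := by
    have := degree_sub_lt_left hdeg (mul_ne_zero (hne i) (hne j)) <| by
      rw [leadingCoeff_mul (C c), leadingCoeff_C,
        div_mul_cancel₀ _ (leadingCoeff_ne_zero.2 (hne h))]
    rwa [hdeg, degree_C_mul hc, hf] at this
  refine ⟨c, hc, ?_⟩
  have := aeval_mem_span_image (x := x) (mem_span_image_of_degree_lt hf h.isLt.le hlt)
  simpa [← hAf, Algebra.smul_def] using this

theorem exists_eq_smul_add_smul_one_of_degree_eq_one {x y : R} {f : F[X]} (hf : f.degree = 1)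
    (hy : y = aeval x f) : ∃ α β : F, α ≠ 0 ∧ x = α • y + β • (1 : R) := by
  obtain ⟨a, b, ha, rfl⟩ : ∃ a b : F, a ≠ 0 ∧ f = C a * X + C b :=
    ⟨_, _, coeff_ne_zero_of_eq_degree hf, eq_X_add_C_of_degree_le_one hf.le⟩
  refine ⟨a⁻¹, -(a⁻¹ * b), inv_ne_zero ha, ?_⟩
  simp [hy, Algebra.algebraMap_eq_smul_one, smul_add, smul_smul, ha]

end PolynomialFamilies

section RankOne

variable {F V : Type*} [Field F] [AddCommGroup V] [Module F V] {e : Module.End F V}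

theorem exists_smul_apply_eq_of_finrank_range_eq_one (he : finrank F (range e) = 1) {x : V}
    (hx : e x ≠ 0) (y : V) : ∃ a : F, a • e x = e y := by
  have hspan := eq_span_singleton_of_mem_of_finrank_eq_one he (mem_range_self e x) hx
  exact mem_span_singleton.1 (hspan ▸ mem_range_self e y)

theorem exists_mul_mul_eq_smul_of_finrank_range_eq_one (he : finrank F (range e) = 1)
    (Y : Module.End F V) : ∃ c : F, e * Y * e = c • e := by
  rcases eq_or_ne e 0 with rfl | he0
  · exact ⟨0, by simp⟩
  obtain ⟨x, hx⟩ := DFunLike.ne_iff.1 he0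
  obtain ⟨c, hc⟩ := exists_smul_apply_eq_of_finrank_range_eq_one he hx (Y (e x))
  refine ⟨c, LinearMap.ext fun y => ?_⟩
  obtain ⟨a, ha⟩ := exists_smul_apply_eq_of_finrank_range_eq_one he hx y
  simp only [Module.End.mul_apply, LinearMap.smul_apply, ← ha, map_smul, ← hc, smul_comm a c]

theorem apply_ne_zero_of_finrank_range_eq_one (he : finrank F (range e) = 1) {x : V}
    (hx : e x ≠ 0) {W : Module.End F V} (hW : W * e ≠ 0) : W (e x) ≠ 0 := by
  refine fun h => hW (LinearMap.ext fun y => ?_)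
  obtain ⟨a, ha⟩ := exists_smul_apply_eq_of_finrank_range_eq_one he hx y
  simp [← ha, h]

variable {ι : Type*} [Fintype ι] [DecidableEq ι] {P A : ι → Module.End F V}

theorem linearIndependent_apply_of_mul_eq_ite
    (hP : ∀ i j, P i * P j = if i = j then P i else 0) {u : V} (hu : ∀ i, P i u ≠ 0) :
    LinearIndependent F fun i => P i u := by
  refine Fintype.linearIndependent_iff.2 fun g hg i => ?_
  have hPP : ∀ j, P i (P j u) = if i = j then P i u else 0 := fun j => by
    rw [← Module.End.mul_apply, hP]; split_ifs <;> rfl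
  simpa [map_sum, hPP, hu] using congrArg (P i) hg

theorem linearIndependent_of_mul_mul_eq (hP : ∀ i j, P i * P j = if i = j then P i else 0)
    (he : finrank F (range e) = 1) (hPe : ∀ i, P i * e ≠ 0) {i₀ : ι}
    (hA : ∀ i, A i * (P i₀ * e) = P i * e) : LinearIndependent F A := by
  obtain ⟨x, hx⟩ := DFunLike.ne_iff.1 fun h : e = 0 => hPe i₀ (by rw [h, mul_zero])
  refine LinearIndependent.of_comp (applyₗ (P i₀ (e x))) ?_
  convert linearIndependent_apply_of_mul_eq_ite hP
    (fun i => apply_ne_zero_of_finrank_range_eq_one he hx (hPe i)) using 1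
  exact funext fun i => LinearMap.congr_fun (hA i) x

theorem eq_one_of_mul_mul_eq (hcard : Fintype.card ι = finrank F V)
    (hP : ∀ i j, P i * P j = if i = j then P i else 0)
    (he : finrank F (range e) = 1) (hPe : ∀ i, P i * e ≠ 0) {i₀ : ι}
    (hA : ∀ i, A i * (P i₀ * e) = P i * e) (hcomm : ∀ i, Commute (A i₀) (A i)) : A i₀ = 1 := by
  obtain ⟨x, hx⟩ := DFunLike.ne_iff.1 fun h : e = 0 => hPe i₀ (by rw [h, mul_zero])
  have : Nonempty ι := ⟨i₀⟩
  have hspan := (linearIndependent_apply_of_mul_eq_ite hP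
    (fun i => apply_ne_zero_of_finrank_range_eq_one he hx (hPe i))).span_eq_top_of_card_eq_finrank
    hcard
  refine ext_on_range hspan fun i => LinearMap.congr_fun (?_ : A i₀ * (P i * e) = P i * e) x
  rw [← hA i, ← mul_assoc, (hcomm i).eq, mul_assoc, hA i₀]

end RankOne

section IntersectionNumbers

variable {F R ι : Type*} [Field F] [Ring R] [Algebra F R]

theorem commute_of_mul_eq_ite [DecidableEq ι] {P : ι → R}
    (hP : ∀ i j, P i * P j = if i = j then P i else 0) (i j : ι) : Commute (P i) (P j) := by
  rcases eq_or_ne i j with rfl | hij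
  · exact Commute.refl _
  · rw [Commute, SemiconjBy, hP, hP, if_neg hij, if_neg hij.symm]

theorem commute_of_mem_span {s : Set R} (hs : ∀ a ∈ s, ∀ b ∈ s, Commute a b) {a b : R}
    (ha : a ∈ span F s) (hb : b ∈ span F s) : Commute a b :=
  Commute.span_left (fun y hy => Commute.span_right (hs y hy) b hb) a ha

variable [Fintype ι] {A P : ι → R} {e : R} {p : ι → ι → ι → F} {i₀ : ι}

theorem LinearIndependent.intersectionNumber_comm (hA : LinearIndependent F A)
    (hcomm : ∀ i j, Commute (A i) (A j)) (hp : ∀ i j, A i * A j = ∑ h, p h i j • A h)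
    (h i j : ι) : p h i j = p h j i :=
  Fintype.linearIndependent_iffₛ.1 hA (p · i j) (p · j i)
    (by rw [← hp i j, ← hp j i, (hcomm i j).eq]) h

theorem mul_mul_eq_sum_smul (hA : ∀ i, A i * (P i₀ * e) = P i * e)
    (hp : ∀ i j, A i * A j = ∑ h, p h i j • A h) (i j : ι) :
    A i * (P j * e) = ∑ h, p h i j • (P h * e) := by
  rw [← hA j, ← mul_assoc, hp, Finset.sum_mul]
  simp only [smul_mul_assoc, hA]

theorem mul_mul_mul_mul_eq_smul [DecidableEq ι]
    (hP : ∀ i j, P i * P j = if i = j then P i else 0) {t : ι → F}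
    (ht : ∀ l, e * P l * e = t l • e) (hA : ∀ i, A i * (P i₀ * e) = P i * e)
    (hp : ∀ i j, A i * A j = ∑ h, p h i j • A h) (h i j : ι) :
    e * P j * A i * P h * e = (t j * p j i h) • e := by
  calc e * P j * A i * P h * e = ∑ l, p l i h • (e * (P j * P l) * e) := by
        simp only [mul_assoc, mul_mul_eq_sum_smul hA hp, Finset.mul_sum, mul_smul_comm]
    _ = (t j * p j i h) • e := by
        simp [hP, ht, mul_smul, mul_comm (t j)]

theorem mul_intersectionNumber_symm [DecidableEq ι] (dag : R ≃ₗ[F] R)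
    (hdag : ∀ Y Z, dag (Y * Z) = dag Z * dag Y) (hdage : dag e = e)
    (hdagP : ∀ i, dag (P i) = P i) (hdagA : ∀ i, dag (A i) = A i) (he : e ≠ 0)
    (hP : ∀ i j, P i * P j = if i = j then P i else 0) {t : ι → F}
    (ht : ∀ l, e * P l * e = t l • e) (hA : ∀ i, A i * (P i₀ * e) = P i * e)
    (hp : ∀ i j, A i * A j = ∑ h, p h i j • A h) (h i j : ι) :
    t h * p h i j = t j * p j i h := by
  have hsand := congrArg dag (mul_mul_mul_mul_eq_smul hP ht hA hp h i j)
  simp only [hdag, hdage, hdagP, hdagA, map_smul, ← mul_assoc] at hsand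
  rw [mul_mul_mul_mul_eq_smul hP ht hA hp j i h] at hsand
  exact smul_left_injective F he hsand

end IntersectionNumbers

section PPolynomial

variable {F R : Type*} [Field F] [Ring R] [Algebra F R] {d : ℕ}

def IsPPolynomial (p : Fin (d + 1) → Fin (d + 1) → Fin (d + 1) → F) : Prop :=
  ∀ h i j : Fin (d + 1),
    (((i : ℕ) + (j : ℕ) < (h : ℕ) ∨ (h : ℕ) + (j : ℕ) < (i : ℕ) ∨
      (h : ℕ) + (i : ℕ) < (j : ℕ)) → p h i j = 0) ∧
    (((h : ℕ) = (i : ℕ) + (j : ℕ) ∨ (i : ℕ) = (h : ℕ) + (j : ℕ) ∨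
      (j : ℕ) = (h : ℕ) + (i : ℕ)) → p h i j ≠ 0)

variable {A : Fin (d + 1) → R} {p : Fin (d + 1) → Fin (d + 1) → Fin (d + 1) → F}

theorem IsPPolynomial.mul_sub_smul_mem_span (hP : IsPPolynomial p)
    (hp : ∀ i j, A i * A j = ∑ h, p h i j • A h) {h i j : Fin (d + 1)} (hh : (h : ℕ) = i + j) :
    A i * A j - p h i j • A h ∈ span F (A '' {l | (l : ℕ) < h}) := by
  rw [hp, sum_smul_sub_smul_eq]
  refine sum_smul_mem_span_image fun l hl => ?_
  rcases eq_or_ne l h with rfl | hlh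
  · simp
  · have hle : (h : ℕ) ≤ l := not_lt.1 hl
    have hlt : (i : ℕ) + j < l := by omega
    simp [(hP l i j).1 (Or.inl hlt), hlh]

theorem IsPPolynomial.exists_mul_sub_smul_mem_span (hP : IsPPolynomial p)
    (hp : ∀ i j, A i * A j = ∑ h, p h i j • A h) (h1 : ((1 : Fin (d + 1)) : ℕ) = 1) {α : F}
    (hα : α ≠ 0) (β : F) {j k : Fin (d + 1)} (hk : (k : ℕ) = j + 1) :
    ∃ c : F, c ≠ 0 ∧ (α • A 1 + β • 1) * A j - c • A k ∈ span F (A '' {l | (l : ℕ) < k}) := by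
  refine ⟨α * p k 1 j, mul_ne_zero hα ((hP k 1 j).2 (Or.inl (by omega))), ?_⟩
  have hx : (α • A 1 + β • 1) * A j - (α * p k 1 j) • A k =
      α • (A 1 * A j - p k 1 j • A k) + β • A j := by
    rw [add_mul, smul_mul_assoc, smul_mul_assoc, one_mul, mul_smul, smul_sub]; abel
  rw [hx]
  exact add_mem (smul_mem _ _ (hP.mul_sub_smul_mem_span hp (by omega)))
    (smul_mem _ _ (subset_span ⟨j, by simp only [Set.mem_ofPred_eq]; omega, rfl⟩))

theorem LinearIndependent.intersectionNumber_eq_zero_and_ne_zero (hA : LinearIndependent F A)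
    (hp : ∀ i j, A i * A j = ∑ h, p h i j • A h)
    (hmul : ∀ h i j : Fin (d + 1), (h : ℕ) = i + j →
      ∃ c : F, c ≠ 0 ∧ A i * A j - c • A h ∈ span F (A '' {l | (l : ℕ) < h}))
    (h i j : Fin (d + 1)) :
    ((i : ℕ) + j < h → p h i j = 0) ∧ ((h : ℕ) = i + j → p h i j ≠ 0) := by
  have hcoeff : ∀ n : Fin (d + 1), (n : ℕ) = i + j → ∃ c : F, c ≠ 0 ∧
      ∀ l : Fin (d + 1), n ≤ l → p l i j = (Pi.single n c : Fin (d + 1) → F) l := by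
    intro n hn
    obtain ⟨c, hc, hmem⟩ := hmul n i j hn
    rw [hp, sum_smul_sub_smul_eq, hA.sum_smul_mem_span_image_iff] at hmem
    exact ⟨c, hc, fun l hl => sub_eq_zero.1 (hmem l (not_lt.2 hl))⟩
  refine ⟨fun hlt => ?_, fun hh => ?_⟩
  · obtain ⟨c, -, hc⟩ := hcoeff ⟨i + j, by omega⟩ rfl
    rw [hc h (Fin.le_def.2 hlt.le), Pi.single_eq_of_ne (Fin.ne_of_gt hlt)]
  · obtain ⟨c, hc0, hc⟩ := hcoeff h hh
    rwa [hc h le_rfl, Pi.single_eq_same]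

theorem isPPolynomial_of_triangular {t : Fin (d + 1) → F} (ht : ∀ l, t l ≠ 0)
    (hsym : ∀ h i j, t h * p h i j = t j * p j i h) (hcomm : ∀ h i j, p h i j = p h j i)
    (htri : ∀ h i j : Fin (d + 1),
      ((i : ℕ) + j < h → p h i j = 0) ∧ ((h : ℕ) = i + j → p h i j ≠ 0)) :
    IsPPolynomial p := by
  have hz : ∀ h i j, p h i j = 0 ↔ p j i h = 0 := fun h i j => by
    simpa [ht] using congrArg (· = 0) (hsym h i j)
  intro h i j
  refine ⟨fun hlt => ?_, fun heq => ?_⟩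
  · rcases hlt with hlt | hlt | hlt
    · exact (htri h i j).1 hlt
    · rw [hcomm, hz]; exact (htri i j h).1 (by omega)
    · rw [hz]; exact (htri j i h).1 (by omega)
  · rcases heq with heq | heq | heq
    · exact (htri h i j).2 heq
    · rw [hcomm, Ne, hz]; exact (htri i j h).2 (by omega)
    · rw [Ne, hz]; exact (htri j i h).2 (by omega)

end PPolynomial

theorem stmt_19_general (d : ℕ) (F V : Type*) [Field F] [AddCommGroup V] [Module F V]
    (hdim : Module.finrank F V = d + 1)
    (E Es : Fin (d + 1) → Module.End F V)
    (hE : ∀ i j, E i * E j = if i = j then E i else 0)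
    (hErk : ∀ i, Module.finrank F (LinearMap.range (E i)) = 1)
    (hEs : ∀ i j, Es i * Es j = if i = j then Es i else 0)
    (hnz : ∀ i, E 0 * Es i * E 0 ≠ 0)
    (dag : Module.End F V ≃ₗ[F] Module.End F V)
    (hdagmul : ∀ Y Z, dag (Y * Z) = dag Z * dag Y)
    (hdagE : ∀ i, dag (E i) = E i)
    (hdagEs : ∀ i, dag (Es i) = Es i)
    (A : Fin (d + 1) → Module.End F V)
    (hAmem : ∀ i, A i ∈ Submodule.span F (Set.range E))
    (hAdef : ∀ i, A i * (Es 0 * E 0) = Es i * E 0)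
    (p : Fin (d + 1) → Fin (d + 1) → Fin (d + 1) → F)
    (hp : ∀ i j, A i * A j = ∑ h, p h i j • A h)
    (hd : 1 ≤ d) (X : Module.End F V) :
    ((∀ h i j : Fin (d + 1),
          (((i : ℕ) + (j : ℕ) < (h : ℕ) ∨ (h : ℕ) + (j : ℕ) < (i : ℕ) ∨
            (h : ℕ) + (i : ℕ) < (j : ℕ)) → p h i j = 0) ∧
          (((h : ℕ) = (i : ℕ) + (j : ℕ) ∨ (i : ℕ) = (h : ℕ) + (j : ℕ) ∨
            (j : ℕ) = (h : ℕ) + (i : ℕ)) → p h i j ≠ 0)) ∧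
        (∃ α β : F, α ≠ 0 ∧ X = α • A 1 + β • (1 : Module.End F V)))
      ↔ (∀ i : Fin (d + 1), ∃ f : Polynomial F,
          f.degree = (i : ℕ) ∧ A i = Polynomial.aeval X f) := by
  have h1 : ((1 : Fin (d + 1)) : ℕ) = 1 := by rw [Fin.val_one', Nat.mod_eq_of_lt (by omega)]
  have hEsE : ∀ i, Es i * E 0 ≠ 0 := fun i h => hnz i (by rw [mul_assoc, h, mul_zero])
  have hAind : LinearIndependent F A := linearIndependent_of_mul_mul_eq hEs (hErk 0) hEsE hAdef
  have hAcomm : ∀ i j, Commute (A i) (A j) := fun i j =>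
    commute_of_mem_span (by rintro _ ⟨k, rfl⟩ _ ⟨l, rfl⟩; exact commute_of_mul_eq_ite hE k l)
      (hAmem i) (hAmem j)
  constructor
  · rintro ⟨hP, α, β, hα, rfl⟩
    have hA0 : A 0 = 1 := eq_one_of_mul_mul_eq (by simp [hdim]) hEs (hErk 0) hEsE hAdef
      fun i => hAcomm 0 i
    exact exists_degree_eq_aeval_of_mul_sub_smul_mem_span hA0 fun j k hk =>
      IsPPolynomial.exists_mul_sub_smul_mem_span hP hp h1 hα β hk
  · intro hf
    choose f hf hAf using hf
    choose t ht using fun l => exists_mul_mul_eq_smul_of_finrank_range_eq_one (hErk 0) (Es l)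
    have ht0 : ∀ l, t l ≠ 0 := fun l h0 => hnz l (by rw [ht, h0, zero_smul])
    have hE0 : E 0 ≠ 0 := fun h0 => hnz 0 (by rw [h0, zero_mul, zero_mul])
    have hdagA : ∀ i, dag (A i) = A i := fun i =>
      LinearMap.eqOn_span (f := dag.toLinearMap) (g := LinearMap.id)
        (by rintro _ ⟨k, rfl⟩; exact hdagE k) (hAmem i)
    refine ⟨isPPolynomial_of_triangular ht0
      (mul_intersectionNumber_symm dag hdagmul (hdagE 0) hdagEs hdagA hE0 hEs ht hAdef hp)
      (hAind.intersectionNumber_comm hAcomm hp)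
      (hAind.intersectionNumber_eq_zero_and_ne_zero hp fun h i j hh =>
        exists_mul_sub_smul_mem_span_of_degree_eq hf hAf hh),
      exists_eq_smul_add_smul_one_of_degree_eq_one (by rw [hf, h1]; rfl) (hAf 1)⟩

theorem stmt_19 (d : ℕ) (F V : Type*) [Field F] [AddCommGroup V] [Module F V]
    [FiniteDimensional F V] (hdim : Module.finrank F V = d + 1)
    (E Es : Fin (d + 1) → Module.End F V)
    (hE : ∀ i j, E i * E j = if i = j then E i else 0)
    (hErk : ∀ i, Module.finrank F (LinearMap.range (E i)) = 1)
    (hEs : ∀ i j, Es i * Es j = if i = j then Es i else 0)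
    (hEsrk : ∀ i, Module.finrank F (LinearMap.range (Es i)) = 1)
    (hnz : ∀ i, E 0 * Es i * E 0 ≠ 0)
    (hnzs : ∀ i, Es 0 * E i * Es 0 ≠ 0)
    (dag : Module.End F V ≃ₗ[F] Module.End F V)
    (hdagmul : ∀ Y Z, dag (Y * Z) = dag Z * dag Y)
    (hdagE : ∀ i, dag (E i) = E i)
    (hdagEs : ∀ i, dag (Es i) = Es i)
    (A : Fin (d + 1) → Module.End F V)
    (hAmem : ∀ i, A i ∈ Submodule.span F (Set.range E))
    (hAdef : ∀ i, A i * (Es 0 * E 0) = Es i * E 0)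
    (p : Fin (d + 1) → Fin (d + 1) → Fin (d + 1) → F)
    (hp : ∀ i j, A i * A j = ∑ h, p h i j • A h)
    (hd : 1 ≤ d) (X : Module.End F V) :
    ((∀ h i j : Fin (d + 1),
          (((i : ℕ) + (j : ℕ) < (h : ℕ) ∨ (h : ℕ) + (j : ℕ) < (i : ℕ) ∨
            (h : ℕ) + (i : ℕ) < (j : ℕ)) → p h i j = 0) ∧
          (((h : ℕ) = (i : ℕ) + (j : ℕ) ∨ (i : ℕ) = (h : ℕ) + (j : ℕ) ∨
            (j : ℕ) = (h : ℕ) + (i : ℕ)) → p h i j ≠ 0)) ∧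
        (∃ α β : F, α ≠ 0 ∧ X = α • A 1 + β • (1 : Module.End F V)))
      ↔ (∀ i : Fin (d + 1), ∃ f : Polynomial F,
          f.degree = (i : ℕ) ∧ A i = Polynomial.aeval X f) :=
  stmt_19_general d F V hdim E Es hE hErk hEs hnz dag hdagmul hdagE hdagEs A hAmem hAdef p hp hd X
end
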